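/- arXiv:1005.0453 — 8 statements merged into one kernel-verified Lean document; each statement's English description precedes it below -/
import Mathlib

section
/- Let a < b be real numbers and let f : ℝ → ℝ be twice differentiable on an open interval containing [a,b] with f'' Lebesgue integrable on [a,b]. Let c, y, d be real numbers with 0 ≤ c ≤ y ≤ d ≤ 1 and 0 < y < 1. Then E(f;a,b;c,y,d) = (b−a)² · ( ∫_0^y ((c−t)²/2) · f''(t·a+(1−t)·b) dt + ∫_y^1 ((d−t)²/2) · f''(t·a+(1−t)·b) dt ). -/
/-!
Put `g t = f (t * a + (1 - t) * b)`, so that `g' = (a - b) f'(…)` and `g'' = (a - b)² f''(…)`.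
Integrating by parts twice against the kernel `(c - t)² / 2` on `[0, y]` and `(d - t)² / 2`
on `[y, 1]` leaves the boundary terms of `E` plus `∫₀¹ g`, and the substitution
`x = t * a + (1 - t) * b` turns `∫₀¹ g` into the mean value `(b - a)⁻¹ ∫ₐᵇ f`.
-/

open MeasureTheory intervalIntegral Set

theorem integral_half_sq_sub_mul_eq {g g' g'' : ℝ → ℝ} {p q : ℝ} (k : ℝ)
    (hg : ∀ t ∈ uIcc p q, HasDerivAt g (g' t) t)
    (hg' : ∀ t ∈ uIcc p q, HasDerivAt g' (g'' t) t)
    (hint : IntervalIntegrable g'' volume p q) :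
    ∫ t in p..q, (k - t) ^ 2 / 2 * g'' t
      = ((k - q) ^ 2 / 2 * g' q - (k - p) ^ 2 / 2 * g' p)
        + ((k - q) * g q - (k - p) * g p) + ∫ t in p..q, g t := by
  have hsq (t : ℝ) : HasDerivAt (fun t => (k - t) ^ 2 / 2) (-(k - t)) t :=
    ((((hasDerivAt_id t).const_sub k).pow 2).div_const 2).congr_deriv (by simp; ring)
  have hlin (t : ℝ) : HasDerivAt (fun t => k - t) (-1) t := (hasDerivAt_id t).const_sub k
  have hg'c : ContinuousOn g' (uIcc p q) :=
    fun t ht => (hg' t ht).continuousAt.continuousWithinAt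
  have first := integral_mul_deriv_eq_deriv_mul (fun t _ => hsq t) hg'
    (continuous_const.sub continuous_id).neg.continuousOn.intervalIntegrable hint
  have second := integral_mul_deriv_eq_deriv_mul (fun t _ => hlin t) hg
    intervalIntegrable_const hg'c.intervalIntegrable
  simp only [neg_mul, one_mul, intervalIntegral.integral_neg] at first second
  rw [first, second]
  ring

theorem integral_split_half_sq_sub_mul_eq {g g' g'' : ℝ → ℝ} {p q y : ℝ} (c d : ℝ)
    (hy : y ∈ uIcc p q)
    (hg : ∀ t ∈ uIcc p q, HasDerivAt g (g' t) t)
    (hg' : ∀ t ∈ uIcc p q, HasDerivAt g' (g'' t) t)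
    (hint : IntervalIntegrable g'' volume p q) :
    (∫ t in p..y, (c - t) ^ 2 / 2 * g'' t) + ∫ t in y..q, (d - t) ^ 2 / 2 * g'' t
      = ((c - y) ^ 2 - (d - y) ^ 2) / 2 * g' y + ((d - q) ^ 2 * g' q - (c - p) ^ 2 * g' p) / 2
        + (c - d) * g y + (d - q) * g q - (c - p) * g p + ∫ t in p..q, g t := by
  have hpy := uIcc_subset_uIcc_left hy
  have hyq := uIcc_subset_uIcc_right hy
  have hgc : ContinuousOn g (uIcc p q) := fun t ht => (hg t ht).continuousAt.continuousWithinAt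
  rw [integral_half_sq_sub_mul_eq c (fun t ht => hg t (hpy ht)) (fun t ht => hg' t (hpy ht))
      (hint.mono_set hpy),
    integral_half_sq_sub_mul_eq d (fun t ht => hg t (hyq ht)) (fun t ht => hg' t (hyq ht))
      (hint.mono_set hyq),
    ← integral_add_adjacent_intervals ((hgc.mono hpy).intervalIntegrable (μ := volume))
      (hgc.mono hyq).intervalIntegrable]
  ring

theorem hasDerivAt_comp_segment {f f' : ℝ → ℝ} {a b t : ℝ}
    (hf : HasDerivAt f (f' (t * a + (1 - t) * b)) (t * a + (1 - t) * b)) :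
    HasDerivAt (fun s => f (s * a + (1 - s) * b)) ((a - b) * f' (t * a + (1 - t) * b)) t := by
  have hline : HasDerivAt (fun s : ℝ => s * a + (1 - s) * b) (a - b) t :=
    (((hasDerivAt_id' t).mul_const a).add
      (((hasDerivAt_id' t).const_sub 1).mul_const b)).congr_deriv (by ring)
  exact (hf.comp t hline).congr_deriv (mul_comm _ _)

theorem IntervalIntegrable.comp_segment {f : ℝ → ℝ} {a b : ℝ} (hab : a ≠ b)
    (hf : IntervalIntegrable f volume a b) :
    IntervalIntegrable (fun t => f (t * a + (1 - t) * b)) volume 0 1 := by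
  have h := (hf.comp_add_right b).comp_mul_left (c := a - b)
  rw [sub_self, zero_div, div_self (sub_ne_zero.mpr hab)] at h
  convert h.symm using 2 with t
  ring_nf

theorem integral_comp_segment (f : ℝ → ℝ) {a b : ℝ} (hab : a ≠ b) :
    ∫ t in (0 : ℝ)..1, f (t * a + (1 - t) * b) = (b - a)⁻¹ * ∫ x in a..b, f x := by
  have h := integral_comp_mul_add f (sub_ne_zero.mpr hab) b (a := 0) (b := 1)
  rw [mul_zero, zero_add, mul_one, sub_add_cancel, integral_symm a b, smul_eq_mul,
    ← neg_sub b a, inv_neg, neg_mul_neg] at h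
  rw [← h]
  congr 1; ext t; ring_nf

theorem stmt_0_general (f f' f'' : ℝ → ℝ) (a b u v c y d : ℝ) (hab : a < b)
    (hua : u < a) (hbv : b < v)
    (hf' : ∀ x ∈ Set.Ioo u v, HasDerivAt f (f' x) x)
    (hf'' : ∀ x ∈ Set.Ioo u v, HasDerivAt f' (f'' x) x)
    (hint : IntervalIntegrable f'' MeasureTheory.volume a b)
    (hy0 : 0 < y) (hy1 : y < 1) :
    (((c - y) ^ 2 - (d - y) ^ 2) / 2) * (a - b) * f' (y * a + (1 - y) * b)
      + (((d - 1) ^ 2 * f' a - c ^ 2 * f' b) / 2) * (a - b)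
      + (c - d) * f (y * a + (1 - y) * b)
      + (d - 1) * f a - c * f b
      + (1 / (b - a)) * ∫ x in a..b, f x
    = (b - a) ^ 2 *
        ((∫ t in (0:ℝ)..y, ((c - t) ^ 2 / 2) * f'' (t * a + (1 - t) * b))
          + ∫ t in y..(1:ℝ), ((d - t) ^ 2 / 2) * f'' (t * a + (1 - t) * b)) := by
  have hmem : ∀ t ∈ uIcc (0 : ℝ) 1, t * a + (1 - t) * b ∈ Ioo u v := by
    rw [uIcc_of_le zero_le_one]
    exact fun t ⟨h0, h1⟩ => ⟨by nlinarith, by nlinarith⟩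
  have hy : y ∈ uIcc (0 : ℝ) 1 := by rw [uIcc_of_le zero_le_one]; exact ⟨hy0.le, hy1.le⟩
  have key := integral_split_half_sq_sub_mul_eq c d hy
    (fun t ht => hasDerivAt_comp_segment (hf' _ (hmem t ht)))
    (fun t ht => ((hasDerivAt_comp_segment (hf'' _ (hmem t ht))).const_mul (a - b)).congr_deriv
      (by ring : (a - b) * ((a - b) * _) = (a - b) ^ 2 * _))
    ((hint.comp_segment hab.ne).const_mul ((a - b) ^ 2))
  simp_rw [mul_left_comm _ ((a - b) ^ 2), intervalIntegral.integral_const_mul] at key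
  rw [integral_comp_segment f hab.ne] at key
  simp only [zero_mul, sub_zero, one_mul, zero_add, sub_self, add_zero] at key
  rw [one_div]
  linear_combination -key

/-- Lemma (Sarikaya–Saglam–Yildirim): integral identity for twice differentiable
functions. `f` is twice differentiable on an open interval `(u, v)` containing
`[a, b]`, with derivative `f'` and second derivative `f''`, and `f''` is
Lebesgue integrable on `[a, b]`. -/
theorem stmt_0 (f f' f'' : ℝ → ℝ) (a b u v c y d : ℝ) (hab : a < b)
    (hua : u < a) (hbv : b < v)
    (hf' : ∀ x ∈ Set.Ioo u v, HasDerivAt f (f' x) x)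
    (hf'' : ∀ x ∈ Set.Ioo u v, HasDerivAt f' (f'' x) x)
    (hint : IntervalIntegrable f'' MeasureTheory.volume a b)
    (hc : 0 ≤ c) (hcy : c ≤ y) (hyd : y ≤ d) (hd : d ≤ 1)
    (hy0 : 0 < y) (hy1 : y < 1) :
    (((c - y) ^ 2 - (d - y) ^ 2) / 2) * (a - b) * f' (y * a + (1 - y) * b)
      + (((d - 1) ^ 2 * f' a - c ^ 2 * f' b) / 2) * (a - b)
      + (c - d) * f (y * a + (1 - y) * b)
      + (d - 1) * f a - c * f b
      + (1 / (b - a)) * ∫ x in a..b, f x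
    = (b - a) ^ 2 *
        ((∫ t in (0:ℝ)..y, ((c - t) ^ 2 / 2) * f'' (t * a + (1 - t) * b))
          + ∫ t in y..(1:ℝ), ((d - t) ^ 2 / 2) * f'' (t * a + (1 - t) * b)) :=
  stmt_0_general f f' f'' a b u v c y d hab hua hbv hf' hf'' hint hy0 hy1
end

section
/- Let a < b be real numbers and let f : ℝ → ℝ be twice differentiable on an open interval containing [a,b] with f'' Lebesgue integrable on [a,b]. Let c, y, d be real numbers with 0 ≤ c ≤ y ≤ d ≤ 1 and 0 < y < 1. If the function x ↦ |f''(x)| is convex on [a,b], then |E(f;a,b;c,y,d)| ≤ ((b−a)²/24)·(A·|f''(a)| + B·|f''(b)|), where A = 6d² − 8d + 3 + (6c² − 6d²)·y² + (8d − 8c)·y³ and B = 6d² − 4d + 1 + (12c² − 12d²)·y + (12d + 6d² − 12c − 6c²)·y² + (8c − 8d)·y³. -/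
/-!
Integrating by parts twice expresses `E` through the Peano kernel of the rule: with
`z = y a + (1 - y) b`,
`(b - a) E = ∫_a^z (x - r₁)²/2 f''(x) dx + ∫_z^b (x - r₂)²/2 f''(x) dx`,
where `r₁ = d a + (1 - d) b` and `r₂ = c a + (1 - c) b`. Convexity bounds `|f''|` on `[a, b]`
by its chord through `(a, |f''(a)|)` and `(b, |f''(b)|)`; since the kernels are nonnegative,
both integrals are then bounded by integrals of explicit cubic polynomials, which evaluate to
the stated constants.
-/

open MeasureTheory intervalIntegral Set

/-- The quantity `E(f; a, b; c, y, d)` of the paper. -/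
noncomputable def quadratureError (f f' : ℝ → ℝ) (a b c y d : ℝ) : ℝ :=
  (((c - y) ^ 2 - (d - y) ^ 2) / 2) * (a - b) * f' (y * a + (1 - y) * b)
    + (((d - 1) ^ 2 * f' a - c ^ 2 * f' b) / 2) * (a - b)
    + (c - d) * f (y * a + (1 - y) * b)
    + (d - 1) * f a - c * f b
    + (1 / (b - a)) * ∫ x in a..b, f x

theorem integral_sq_sub_div_two_mul_second_deriv {f f' f'' : ℝ → ℝ} {p q : ℝ} (r : ℝ)
    (hf' : ∀ x ∈ uIcc p q, HasDerivAt f (f' x) x)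
    (hf'' : ∀ x ∈ uIcc p q, HasDerivAt f' (f'' x) x)
    (hint : IntervalIntegrable f'' volume p q) :
    ∫ x in p..q, (x - r) ^ 2 / 2 * f'' x
      = (q - r) ^ 2 / 2 * f' q - (p - r) ^ 2 / 2 * f' p
        - (q - r) * f q + (p - r) * f p + ∫ x in p..q, f x := by
  have hsq : ∀ x ∈ uIcc p q, HasDerivAt (fun t => (t - r) ^ 2 / 2) (x - r) x := fun x _ => by
    simpa using (((hasDerivAt_id x).sub_const r).fun_pow 2).div_const 2
  have hlin : ∀ x ∈ uIcc p q, HasDerivAt (fun t => t - r) 1 x := fun x _ =>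
    (hasDerivAt_id x).sub_const r
  have hf'_int : IntervalIntegrable f' volume p q :=
    ContinuousOn.intervalIntegrable fun x hx => (hf'' x hx).continuousAt.continuousWithinAt
  rw [integral_mul_deriv_eq_deriv_mul hsq hf''
      ((continuous_id.sub continuous_const).intervalIntegrable p q) hint,
    integral_mul_deriv_eq_deriv_mul hlin hf' intervalIntegrable_const hf'_int]
  simp only [one_mul]
  ring

theorem ConvexOn.le_chord {s : Set ℝ} {g : ℝ → ℝ} (hg : ConvexOn ℝ s g) {a b x : ℝ}
    (ha : a ∈ s) (hb : b ∈ s) (hab : a < b) (hx : x ∈ Icc a b) :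
    g x ≤ ((b - x) * g a + (x - a) * g b) / (b - a) := by
  have hba : 0 < b - a := sub_pos.2 hab
  have hx_eq : ((b - x) / (b - a)) • a + ((x - a) / (b - a)) • b = x := by
    simp only [smul_eq_mul]; field_simp; ring
  calc g x = g (((b - x) / (b - a)) • a + ((x - a) / (b - a)) • b) := by rw [hx_eq]
    _ ≤ ((b - x) / (b - a)) • g a + ((x - a) / (b - a)) • g b :=
      hg.2 ha hb (div_nonneg (sub_nonneg.2 hx.2) hba.le) (div_nonneg (sub_nonneg.2 hx.1) hba.le)
        (by field_simp; ring)
    _ = ((b - x) * g a + (x - a) * g b) / (b - a) := by simp only [smul_eq_mul]; ring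

theorem integral_sq_sub_div_two_mul_chord {a b α β r p q : ℝ} (hab : a ≠ b) :
    ∫ x in p..q, (x - r) ^ 2 / 2 * (((b - x) * α + (x - a) * β) / (b - a))
      = (((b - r) * α + (r - a) * β) * ((q - r) ^ 3 - (p - r) ^ 3) / 6
          + (β - α) * ((q - r) ^ 4 - (p - r) ^ 4) / 8) / (b - a) := by
  have hF : ∀ x ∈ uIcc p q, HasDerivAt
      (fun t => (((b - r) * α + (r - a) * β) * (t - r) ^ 3 / 6 + (β - α) * (t - r) ^ 4 / 8)
        / (b - a))
      ((x - r) ^ 2 / 2 * (((b - x) * α + (x - a) * β) / (b - a))) x := fun x _ => by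
    have h3 : HasDerivAt (fun t : ℝ => (t - r) ^ 3) (3 * (x - r) ^ 2) x := by
      simpa using ((hasDerivAt_id x).sub_const r).fun_pow 3
    have h4 : HasDerivAt (fun t : ℝ => (t - r) ^ 4) (4 * (x - r) ^ 3) x := by
      simpa using ((hasDerivAt_id x).sub_const r).fun_pow 4
    refine ((((h3.const_mul _).div_const 6).add ((h4.const_mul _).div_const 8)).div_const
      _).congr_deriv ?_
    field_simp [sub_ne_zero.2 hab.symm]
    ring
  rw [integral_eq_sub_of_hasDerivAt hF (Continuous.intervalIntegrable (by fun_prop) p q)]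
  ring

theorem abs_integral_sq_sub_div_two_mul_le {h : ℝ → ℝ} {a b p q : ℝ} (r : ℝ) (hab : a < b)
    (hconv : ConvexOn ℝ (Icc a b) fun x => |h x|) (hap : a ≤ p) (hpq : p ≤ q)
    (hqb : q ≤ b) :
    |∫ x in p..q, (x - r) ^ 2 / 2 * h x|
      ≤ ∫ x in p..q, (x - r) ^ 2 / 2 * (((b - x) * |h a| + (x - a) * |h b|) / (b - a)) := by
  rw [← Real.norm_eq_abs]
  refine norm_integral_le_of_norm_le hpq (Filter.Eventually.of_forall fun x hx => ?_)
    (Continuous.intervalIntegrable (by fun_prop) p q)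
  rw [Real.norm_eq_abs, abs_mul, abs_of_nonneg (by positivity)]
  exact mul_le_mul_of_nonneg_left (hconv.le_chord (left_mem_Icc.2 hab.le)
    (right_mem_Icc.2 hab.le) hab ⟨hap.trans hx.1.le, hx.2.trans hqb⟩) (by positivity)

theorem quadratureError_eq_peano_kernel {f f' f'' : ℝ → ℝ} {a b : ℝ} (c y d : ℝ)
    (hab : a < b) (hy0 : 0 ≤ y) (hy1 : y ≤ 1)
    (hf' : ∀ x ∈ Icc a b, HasDerivAt f (f' x) x)
    (hf'' : ∀ x ∈ Icc a b, HasDerivAt f' (f'' x) x)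
    (hint : IntervalIntegrable f'' volume a b) :
    quadratureError f f' a b c y d
      = ((∫ x in a..y * a + (1 - y) * b, (x - (d * a + (1 - d) * b)) ^ 2 / 2 * f'' x)
          + ∫ x in y * a + (1 - y) * b..b, (x - (c * a + (1 - c) * b)) ^ 2 / 2 * f'' x)
        / (b - a) := by
  have haz : a ≤ y * a + (1 - y) * b := by nlinarith
  have hzb : y * a + (1 - y) * b ≤ b := by nlinarith
  have h₁ : uIcc a (y * a + (1 - y) * b) ⊆ Icc a b := by
    rw [uIcc_of_le haz]; exact Icc_subset_Icc le_rfl hzb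
  have h₂ : uIcc (y * a + (1 - y) * b) b ⊆ Icc a b := by
    rw [uIcc_of_le hzb]; exact Icc_subset_Icc haz le_rfl
  have hf_int : ∀ {p q}, uIcc p q ⊆ Icc a b → IntervalIntegrable f volume p q := fun hpq =>
    ContinuousOn.intervalIntegrable fun x hx =>
      (hf' x (hpq hx)).continuousAt.continuousWithinAt
  have hint' : ∀ {p q}, uIcc p q ⊆ Icc a b → IntervalIntegrable f'' volume p q := fun hpq =>
    hint.mono_set (by rwa [uIcc_of_le hab.le])
  rw [integral_sq_sub_div_two_mul_second_deriv _ (fun x hx => hf' x (h₁ hx))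
      (fun x hx => hf'' x (h₁ hx)) (hint' h₁),
    integral_sq_sub_div_two_mul_second_deriv _ (fun x hx => hf' x (h₂ hx))
      (fun x hx => hf'' x (h₂ hx)) (hint' h₂),
    quadratureError, ← integral_add_adjacent_intervals (hf_int h₁) (hf_int h₂)]
  field_simp [(sub_pos.2 hab).ne']
  ring

theorem stmt_1_general (f f' f'' : ℝ → ℝ) (a b u v c y d : ℝ) (hab : a < b)
(hua : u < a) (hbv : b < v)
    (hf' : ∀ x ∈ Set.Ioo u v, HasDerivAt f (f' x) x)
    (hf'' : ∀ x ∈ Set.Ioo u v, HasDerivAt f' (f'' x) x)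
    (hint : IntervalIntegrable f'' MeasureTheory.volume a b)
    (hy0 : 0 < y) (hy1 : y < 1)
    (hconv : ConvexOn ℝ (Set.Icc a b) (fun x => |f'' x|)) :
|(((c - y) ^ 2 - (d - y) ^ 2) / 2) * (a - b) * f' (y * a + (1 - y) * b)
      + (((d - 1) ^ 2 * f' a - c ^ 2 * f' b) / 2) * (a - b)
      + (c - d) * f (y * a + (1 - y) * b)
      + (d - 1) * f a - c * f b
      + (1 / (b - a)) * ∫ x in a..b, f x|
    ≤ ((b - a) ^ 2 / 24) *
        ((6 * d ^ 2 - 8 * d + 3 + (6 * c ^ 2 - 6 * d ^ 2) * y ^ 2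
            + (8 * d - 8 * c) * y ^ 3) * |f'' a|
          + (6 * d ^ 2 - 4 * d + 1 + (12 * c ^ 2 - 12 * d ^ 2) * y
            + (12 * d + 6 * d ^ 2 - 12 * c - 6 * c ^ 2) * y ^ 2
            + (8 * c - 8 * d) * y ^ 3) * |f'' b|) := by
  have hIcc : Icc a b ⊆ Ioo u v := Icc_subset_Ioo hua hbv
  have haz : a ≤ y * a + (1 - y) * b := by nlinarith
  have hzb : y * a + (1 - y) * b ≤ b := by nlinarith
  have hba : 0 < b - a := sub_pos.2 hab
  have hI₁ := abs_integral_sq_sub_div_two_mul_le (d * a + (1 - d) * b) hab hconv le_rfl haz hzb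
  have hI₂ := abs_integral_sq_sub_div_two_mul_le (c * a + (1 - c) * b) hab hconv haz hzb le_rfl
  rw [integral_sq_sub_div_two_mul_chord hab.ne] at hI₁ hI₂
  change |quadratureError f f' a b c y d| ≤ _
  rw [quadratureError_eq_peano_kernel c y d hab hy0.le hy1.le (fun x hx => hf' x (hIcc hx))
    (fun x hx => hf'' x (hIcc hx)) hint, abs_div, abs_of_pos hba, div_le_iff₀ hba]
  refine (abs_add_le _ _).trans ((add_le_add hI₁ hI₂).trans (le_of_eq ?_))
  field_simp
  ring

/-- Theorem 9 of the paper: if |f''| is convex on [a,b], then |E(f;a,b;c,y,d)| is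
bounded by ((b-a)²/24)(A|f''(a)| + B|f''(b)|). -/
theorem stmt_1 (f f' f'' : ℝ → ℝ) (a b u v c y d : ℝ) (hab : a < b)
(hua : u < a) (hbv : b < v)
    (hf' : ∀ x ∈ Set.Ioo u v, HasDerivAt f (f' x) x)
    (hf'' : ∀ x ∈ Set.Ioo u v, HasDerivAt f' (f'' x) x)
    (hint : IntervalIntegrable f'' MeasureTheory.volume a b)
    (hc : 0 ≤ c) (hcy : c ≤ y) (hyd : y ≤ d) (hd : d ≤ 1)
    (hy0 : 0 < y) (hy1 : y < 1)
    (hconv : ConvexOn ℝ (Set.Icc a b) (fun x => |f'' x|)) :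
|(((c - y) ^ 2 - (d - y) ^ 2) / 2) * (a - b) * f' (y * a + (1 - y) * b)
      + (((d - 1) ^ 2 * f' a - c ^ 2 * f' b) / 2) * (a - b)
      + (c - d) * f (y * a + (1 - y) * b)
      + (d - 1) * f a - c * f b
      + (1 / (b - a)) * ∫ x in a..b, f x|
    ≤ ((b - a) ^ 2 / 24) *
        ((6 * d ^ 2 - 8 * d + 3 + (6 * c ^ 2 - 6 * d ^ 2) * y ^ 2
            + (8 * d - 8 * c) * y ^ 3) * |f'' a|
          + (6 * d ^ 2 - 4 * d + 1 + (12 * c ^ 2 - 12 * d ^ 2) * y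
            + (12 * d + 6 * d ^ 2 - 12 * c - 6 * c ^ 2) * y ^ 2
            + (8 * c - 8 * d) * y ^ 3) * |f'' b|) :=
  stmt_1_general f f' f'' a b u v c y d hab hua hbv hf' hf'' hint hy0 hy1 hconv
end

section
/- Let a < b be real numbers and let f : ℝ → ℝ be twice differentiable on an open interval containing [a,b] with f'' Lebesgue integrable on [a,b]. If the function x ↦ |f''(x)| is convex on [a,b], then |(1/(b−a))·∫_a^b f(x) dx − f((a+b)/2)| ≤ ((b−a)²/48)·(|f''(a)| + |f''(b)|). -/
/-!
Two integrations by parts give the Peano-kernel identity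
`∫_a^b f - (b - a) f(m) = ∫_a^m (x - a)²/2 f''(x) dx + ∫_m^b (x - b)²/2 f''(x) dx`
with `m = (a + b)/2`. Convexity bounds `|f''|` by its chord through `(a, |f''(a)|)` and
`(b, |f''(b)|)`, and integrating the nonnegative kernel against that chord gives
`(b - a)³ (|f''(a)| + |f''(b)|) / 48`.
-/

open intervalIntegral Set

theorem add_div_two_mem_uIcc (a b : ℝ) : (a + b) / 2 ∈ uIcc a b := by
  rw [mem_uIcc]
  rcases le_total a b with h | h
  · exact Or.inl ⟨by linarith, by linarith⟩
  · exact Or.inr ⟨by linarith, by linarith⟩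

theorem ConvexOn.mul_le_of_mem_Icc {g : ℝ → ℝ} {a b x : ℝ} (hg : ConvexOn ℝ (Icc a b) g)
    (hx : x ∈ Icc a b) : (b - a) * g x ≤ (b - x) * g a + (x - a) * g b := by
  obtain ⟨hax, hxb⟩ := hx
  rcases hax.eq_or_lt with rfl | hax
  · linarith
  rcases hxb.eq_or_lt with rfl | hxb
  · linarith
  exact hg.secant_mono_aux1 (left_mem_Icc.2 (by linarith)) (right_mem_Icc.2 (by linarith)) hax hxb

theorem integral_sub_sq_mul_affine (c d p α β : ℝ) :
    ∫ x in c..d, (x - p) ^ 2 * (α + β * (x - p)) =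
      α * ((d - p) ^ 3 - (c - p) ^ 3) / 3 + β * ((d - p) ^ 4 - (c - p) ^ 4) / 4 := by
  have h : ∀ x : ℝ, (x - p) ^ 2 * (α + β * (x - p)) = α * (x - p) ^ 2 + β * (x - p) ^ 3 :=
    fun x => by ring
  simp only [h]
  rw [intervalIntegral.integral_add (by apply Continuous.intervalIntegrable; fun_prop)
      (by apply Continuous.intervalIntegrable; fun_prop),
    integral_const_mul, integral_const_mul,
    integral_comp_sub_right (fun x => x ^ 2), integral_comp_sub_right (fun x => x ^ 3),
    integral_pow, integral_pow]
  ring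

theorem abs_integral_mul_le_integral_mul {w g h : ℝ → ℝ} {c d : ℝ} (hcd : c ≤ d)
    (hw : ContinuousOn w (uIcc c d)) (hw0 : ∀ x ∈ Icc c d, 0 ≤ w x)
    (hg : IntervalIntegrable g MeasureTheory.volume c d)
    (hh : IntervalIntegrable h MeasureTheory.volume c d) (hgh : ∀ x ∈ Icc c d, |g x| ≤ h x) :
    |∫ x in c..d, w x * g x| ≤ ∫ x in c..d, w x * h x := by
  calc |∫ x in c..d, w x * g x|
      ≤ ∫ x in c..d, |w x * g x| := abs_integral_le_integral_abs hcd
    _ ≤ ∫ x in c..d, w x * h x := by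
      refine integral_mono_on hcd (hg.continuousOn_mul hw).abs (hh.continuousOn_mul hw)
        fun x hx => ?_
      rw [abs_mul, abs_of_nonneg (hw0 x hx)]
      exact mul_le_mul_of_nonneg_left (hgh x hx) (hw0 x hx)

section SecondDerivative

variable {f f' f'' : ℝ → ℝ} {a b : ℝ}

theorem integral_sub_sq_div_two_mul_deriv2 (p : ℝ)
    (hf : ∀ x ∈ uIcc a b, HasDerivAt f (f' x) x) (hf' : ∀ x ∈ uIcc a b, HasDerivAt f' (f'' x) x)
    (hf'' : IntervalIntegrable f'' MeasureTheory.volume a b) :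
    ∫ x in a..b, (x - p) ^ 2 / 2 * f'' x =
      ((b - p) ^ 2 / 2 * f' b - (b - p) * f b) - ((a - p) ^ 2 / 2 * f' a - (a - p) * f a) +
        ∫ x in a..b, f x := by
  have hsq : ∀ x, HasDerivAt (fun y => (y - p) ^ 2 / 2) (x - p) x := fun x => by
    simpa using (((hasDerivAt_id x).sub_const p).pow 2).div_const 2
  have hlin : ∀ x, HasDerivAt (fun y => y - p) 1 x := fun x => (hasDerivAt_id x).sub_const p
  have hf'_int : IntervalIntegrable f' MeasureTheory.volume a b :=
    ContinuousOn.intervalIntegrable fun x hx => (hf' x hx).continuousAt.continuousWithinAt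
  rw [integral_mul_deriv_eq_deriv_mul (fun x _ => hsq x) hf'
      ((continuous_id.sub continuous_const).intervalIntegrable a b) hf'',
    integral_mul_deriv_eq_deriv_mul (fun x _ => hlin x) hf
      (continuous_const.intervalIntegrable a b) hf'_int]
  simp only [one_mul]
  ring

theorem integral_sub_mul_midpoint_eq
    (hf : ∀ x ∈ uIcc a b, HasDerivAt f (f' x) x) (hf' : ∀ x ∈ uIcc a b, HasDerivAt f' (f'' x) x)
    (hf'' : IntervalIntegrable f'' MeasureTheory.volume a b) :
    (∫ x in a..b, f x) - (b - a) * f ((a + b) / 2) =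
      (∫ x in a..(a + b) / 2, (x - a) ^ 2 / 2 * f'' x) +
        ∫ x in (a + b) / 2..b, (x - b) ^ 2 / 2 * f'' x := by
  have hl := uIcc_subset_uIcc_left (add_div_two_mem_uIcc a b)
  have hr := uIcc_subset_uIcc_right (add_div_two_mem_uIcc a b)
  have hf_int : IntervalIntegrable f MeasureTheory.volume a b :=
    ContinuousOn.intervalIntegrable fun x hx => (hf x hx).continuousAt.continuousWithinAt
  rw [integral_sub_sq_div_two_mul_deriv2 a (fun x hx => hf x (hl hx)) (fun x hx => hf' x (hl hx))
      (hf''.mono_set hl),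
    integral_sub_sq_div_two_mul_deriv2 b (fun x hx => hf x (hr hx)) (fun x hx => hf' x (hr hx))
      (hf''.mono_set hr),
    ← integral_add_adjacent_intervals (hf_int.mono_set hl) (hf_int.mono_set hr)]
  ring

theorem abs_integral_sub_mul_midpoint_le {h : ℝ → ℝ} (hab : a ≤ b)
    (hf : ∀ x ∈ uIcc a b, HasDerivAt f (f' x) x) (hf' : ∀ x ∈ uIcc a b, HasDerivAt f' (f'' x) x)
    (hf'' : IntervalIntegrable f'' MeasureTheory.volume a b)
    (hh : IntervalIntegrable h MeasureTheory.volume a b) (hf''h : ∀ x ∈ Icc a b, |f'' x| ≤ h x) :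
    |(∫ x in a..b, f x) - (b - a) * f ((a + b) / 2)| ≤
      (∫ x in a..(a + b) / 2, (x - a) ^ 2 / 2 * h x) +
        ∫ x in (a + b) / 2..b, (x - b) ^ 2 / 2 * h x := by
  have ham : a ≤ (a + b) / 2 := by linarith
  have hmb : (a + b) / 2 ≤ b := by linarith
  have hl := uIcc_subset_uIcc_left (add_div_two_mem_uIcc a b)
  have hr := uIcc_subset_uIcc_right (add_div_two_mem_uIcc a b)
  rw [integral_sub_mul_midpoint_eq hf hf' hf'']
  refine (abs_add_le _ _).trans (add_le_add ?_ ?_)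
  · exact abs_integral_mul_le_integral_mul ham (by fun_prop) (fun x _ => by positivity)
      (hf''.mono_set hl) (hh.mono_set hl) fun x hx => hf''h x ⟨hx.1, hx.2.trans hmb⟩
  · exact abs_integral_mul_le_integral_mul hmb (by fun_prop) (fun x _ => by positivity)
      (hf''.mono_set hr) (hh.mono_set hr) fun x hx => hf''h x ⟨ham.trans hx.1, hx.2⟩

end SecondDerivative

theorem integral_midpoint_kernel_mul_chord {a b : ℝ} (hab : a ≠ b) (A B : ℝ) :
    (∫ x in a..(a + b) / 2, (x - a) ^ 2 / 2 * (((b - x) * A + (x - a) * B) / (b - a))) +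
        ∫ x in (a + b) / 2..b, (x - b) ^ 2 / 2 * (((b - x) * A + (x - a) * B) / (b - a)) =
      (b - a) ^ 3 * (A + B) / 48 := by
  have hba : b - a ≠ 0 := sub_ne_zero.2 hab.symm
  -- the chord, re-expanded around a point `p` where it takes the value `C`
  have hchord (p C : ℝ) (hp : ((b - p) * A + (p - a) * B) / (b - a) = C) (x : ℝ) :
      (x - p) ^ 2 / 2 * (((b - x) * A + (x - a) * B) / (b - a)) =
        (x - p) ^ 2 * (C / 2 + (B - A) / (2 * (b - a)) * (x - p)) := by
    rw [← hp]; field_simp; ring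
  simp only [hchord a A (by field_simp; ring), hchord b B (by field_simp; ring),
    integral_sub_sq_mul_affine]
  field_simp
  ring

/-- Midpoint inequality: if |f''| is convex on [a,b] then
|(1/(b−a))∫_a^b f − f((a+b)/2)| ≤ ((b−a)²/48)(|f''(a)|+|f''(b)|). -/
theorem stmt_2 (f f' f'' : ℝ → ℝ) (a b u v : ℝ) (hab : a < b)
(hua : u < a) (hbv : b < v)
    (hf' : ∀ x ∈ Set.Ioo u v, HasDerivAt f (f' x) x)
    (hf'' : ∀ x ∈ Set.Ioo u v, HasDerivAt f' (f'' x) x)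
    (hint : IntervalIntegrable f'' MeasureTheory.volume a b)
    (hconv : ConvexOn ℝ (Set.Icc a b) (fun x => |f'' x|)) :
    |(1 / (b - a)) * (∫ x in a..b, f x) - f ((a + b) / 2)|
      ≤ ((b - a) ^ 2 / 48) * (|f'' a| + |f'' b|) := by
  have hba : 0 < b - a := sub_pos.2 hab
  have hsub : uIcc a b ⊆ Ioo u v := by
    rw [uIcc_of_le hab.le]; exact Icc_subset_Ioo hua hbv
  have hbound := abs_integral_sub_mul_midpoint_le hab.le (fun x hx => hf' x (hsub hx))
    (fun x hx => hf'' x (hsub hx)) hint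
    (h := fun x => ((b - x) * |f'' a| + (x - a) * |f'' b|) / (b - a))
    (by apply Continuous.intervalIntegrable; fun_prop)
    (fun x hx => by rw [le_div_iff₀ hba, mul_comm]; exact hconv.mul_le_of_mem_Icc hx)
  rw [integral_midpoint_kernel_mul_chord hab.ne] at hbound
  rw [show (1 / (b - a)) * (∫ x in a..b, f x) - f ((a + b) / 2) =
      ((∫ x in a..b, f x) - (b - a) * f ((a + b) / 2)) / (b - a) by field_simp,
    abs_div, abs_of_pos hba, div_le_iff₀ hba]
  calc _ ≤ (b - a) ^ 3 * (|f'' a| + |f'' b|) / 48 := hbound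
    _ = _ := by ring
end

section
/- Let a < b be real numbers and let f : ℝ → ℝ be twice differentiable on an open interval containing [a,b] with f'' Lebesgue integrable on [a,b]. Let c, y, d be real numbers with 0 ≤ c ≤ y ≤ d ≤ 1 and 0 < y < 1, and let p, q > 1 satisfy 1/p + 1/q = 1. If the function x ↦ |f''(x)|^q is convex on [a,b], then |E(f;a,b;c,y,d)| ≤ ((b−a)²/2)·(1/(2p+1))^(1/p) · ( (c^(2p+1) + (y−c)^(2p+1))^(1/p) · ((y²·|f''(a)|^q + (2y−y²)·|f''(b)|^q)/2)^(1/q) + ((d−y)^(2p+1) + (1−d)^(2p+1))^(1/p) · (((1−y²)·|f''(a)|^q + (1−y)²·|f''(b)|^q)/2)^(1/q) ). -/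
/-! With `g t = f (t a + (1 - t) b)`, two integrations by parts against the kernels `(t - c)²` on
`[0, y]` and `(t - d)²` on `[y, 1]` turn the left-hand side into `(b - a)² / 2` times the sum of
the integrals of kernel × `f'' (t a + (1 - t) b)`. Hölder's inequality bounds each piece by the
explicitly computable `L^p` norm of the kernel times the `L^q` norm of `f''`, and convexity of
`|f''| ^ q` bounds the latter by the integral of `t |f'' a| ^ q + (1 - t) |f'' b| ^ q`. -/

open MeasureTheory Set

theorem integral_mul_add_one_sub_mul (α β A B : ℝ) :
    ∫ t in α..β, (t * A + (1 - t) * B) =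
      ((β ^ 2 - α ^ 2) * A + (2 * (β - α) - (β ^ 2 - α ^ 2)) * B) / 2 := by
  simp only [sub_mul, one_mul]
  have hcont {φ : ℝ → ℝ} (hφ : Continuous φ) : IntervalIntegrable φ volume α β :=
    hφ.intervalIntegrable α β
  rw [intervalIntegral.integral_add (hcont (by fun_prop)) (hcont (by fun_prop)),
    intervalIntegral.integral_sub (hcont (by fun_prop)) (hcont (by fun_prop)),
    intervalIntegral.integral_mul_const, intervalIntegral.integral_mul_const, integral_id,
    intervalIntegral.integral_const, smul_eq_mul]
  ring

theorem integral_abs_sub_rpow {α δ β r : ℝ} (hαδ : α ≤ δ) (hδβ : δ ≤ β) (hr : 0 ≤ r) :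
    ∫ t in α..β, |t - δ| ^ r = ((δ - α) ^ (r + 1) + (β - δ) ^ (r + 1)) / (r + 1) := by
  have hcont : Continuous fun t : ℝ => |t - δ| ^ r := by fun_prop (disch := exact hr)
  have hleft : ∫ t in α..δ, |t - δ| ^ r = ∫ t in α..δ, (δ - t) ^ r :=
    intervalIntegral.integral_congr fun t ht => by
      rw [uIcc_of_le hαδ] at ht
      rw [abs_of_nonpos (by linarith [ht.2]), neg_sub]
  have hright : ∫ t in δ..β, |t - δ| ^ r = ∫ t in δ..β, (t - δ) ^ r :=
    intervalIntegral.integral_congr fun t ht => by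
      rw [uIcc_of_le hδβ] at ht
      rw [abs_of_nonneg (by linarith [ht.1])]
  have hr1 : r + 1 ≠ 0 := by linarith
  rw [← intervalIntegral.integral_add_adjacent_intervals (hcont.intervalIntegrable α δ)
    (hcont.intervalIntegrable δ β), hleft, hright, intervalIntegral.integral_comp_sub_left (· ^ r),
    intervalIntegral.integral_comp_sub_right (· ^ r), integral_rpow (Or.inl (by linarith)),
    integral_rpow (Or.inl (by linarith)), sub_self, Real.zero_rpow hr1]
  ring

theorem integral_sub_sq_mul_eq {g g' g'' : ℝ → ℝ} {s r δ : ℝ}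
    (hg : ∀ x ∈ uIcc s r, HasDerivAt g (g' x) x)
    (hg' : ∀ x ∈ uIcc s r, HasDerivAt g' (g'' x) x)
    (hg'' : IntervalIntegrable g'' volume s r) :
    ∫ x in s..r, (x - δ) ^ 2 * g'' x
      = (r - δ) ^ 2 * g' r - (s - δ) ^ 2 * g' s - 2 * (r - δ) * g r + 2 * (s - δ) * g s
        + 2 * ∫ x in s..r, g x := by
  have hsq : ∀ x ∈ uIcc s r, HasDerivAt (fun x : ℝ => (x - δ) ^ 2) (2 * (x - δ)) x :=
    fun x _ => by simpa using ((hasDerivAt_id x).sub_const δ).fun_pow 2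
  have hlin : ∀ x ∈ uIcc s r, HasDerivAt (fun x : ℝ => 2 * (x - δ)) 2 x :=
    fun x _ => by simpa using ((hasDerivAt_id x).sub_const δ).const_mul 2
  have hg'i : IntervalIntegrable g' volume s r :=
    ContinuousOn.intervalIntegrable fun x hx => (hg' x hx).continuousAt.continuousWithinAt
  rw [intervalIntegral.integral_mul_deriv_eq_deriv_mul hsq hg'
    (Continuous.intervalIntegrable (by fun_prop) _ _) hg'',
    intervalIntegral.integral_mul_deriv_eq_deriv_mul hlin hg intervalIntegrable_const hg'i,
    intervalIntegral.integral_const_mul]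
  ring

theorem memLp_restrict_Ioc_of_abs_rpow_le {w φ : ℝ → ℝ} {s r p : ℝ} (hsr : s ≤ r) (hp : 0 < p)
    (hw : AEStronglyMeasurable w (volume.restrict (Ioc s r)))
    (hφ : IntervalIntegrable φ volume s r) (hwφ : ∀ t ∈ Ioc s r, |w t| ^ p ≤ φ t) :
    MemLp w (ENNReal.ofReal p) (volume.restrict (Ioc s r)) := by
  rw [← integrable_norm_rpow_iff hw (by simpa using hp) ENNReal.ofReal_ne_top,
    ENNReal.toReal_ofReal hp.le]
  refine ((intervalIntegrable_iff_integrableOn_Ioc_of_le hsr).1 hφ).mono'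
    (hw.norm.aemeasurable.pow_const p).aestronglyMeasurable ?_
  filter_upwards [ae_restrict_mem measurableSet_Ioc] with t ht
  rw [Real.norm_of_nonneg (by positivity)]
  exact hwφ t ht

theorem intervalIntegrable_of_abs_rpow_le {w φ : ℝ → ℝ} {s r p : ℝ} (hsr : s ≤ r) (hp : 1 ≤ p)
    (hw : AEStronglyMeasurable w (volume.restrict (Ioc s r)))
    (hφ : IntervalIntegrable φ volume s r) (hwφ : ∀ t ∈ Ioc s r, |w t| ^ p ≤ φ t) :
    IntervalIntegrable w volume s r :=
  (intervalIntegrable_iff_integrableOn_Ioc_of_le hsr).2 <|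
    (memLp_restrict_Ioc_of_abs_rpow_le hsr (by linarith) hw hφ hwφ).integrable (by simpa using hp)

theorem abs_intervalIntegral_mul_le_Lp_mul_Lq {u w : ℝ → ℝ} {s r p q : ℝ} (hsr : s ≤ r)
    (hpq : p.HolderConjugate q) (hu : MemLp u (ENNReal.ofReal p) (volume.restrict (Ioc s r)))
    (hw : MemLp w (ENNReal.ofReal q) (volume.restrict (Ioc s r))) :
    |∫ t in s..r, u t * w t|
      ≤ (∫ t in s..r, |u t| ^ p) ^ (1 / p) * (∫ t in s..r, |w t| ^ q) ^ (1 / q) := by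
  simp only [intervalIntegral.integral_of_le hsr, ← Real.norm_eq_abs]
  calc ‖∫ t in Ioc s r, u t * w t‖ ≤ ∫ t in Ioc s r, ‖u t‖ * ‖w t‖ := by
        simpa only [norm_mul] using norm_integral_le_integral_norm (fun t => u t * w t)
    _ ≤ _ := integral_mul_norm_le_Lp_mul_Lq hpq hu hw

theorem abs_integral_sub_sq_mul_le {w φ : ℝ → ℝ} {s δ r p q : ℝ} (hsδ : s ≤ δ) (hδr : δ ≤ r)
    (hpq : p.HolderConjugate q) (hw : AEStronglyMeasurable w (volume.restrict (Ioc s r)))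
    (hφ : IntervalIntegrable φ volume s r) (hwφ : ∀ t ∈ Ioc s r, |w t| ^ q ≤ φ t) :
    |∫ t in s..r, (t - δ) ^ 2 * w t|
      ≤ (1 / (2 * p + 1)) ^ (1 / p) * ((δ - s) ^ (2 * p + 1) + (r - δ) ^ (2 * p + 1)) ^ (1 / p)
        * (∫ t in s..r, φ t) ^ (1 / q) := by
  have hsr : s ≤ r := hsδ.trans hδr
  have hp := hpq.pos
  have hq := hpq.symm.pos
  have hsq (t : ℝ) : |(t - δ) ^ 2| ^ p = |t - δ| ^ (2 * p) := by
    rw [← sq_abs, abs_pow, abs_abs, ← Real.rpow_natCast, ← Real.rpow_mul (abs_nonneg _)]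
    norm_num
  have hu : MemLp (fun t => (t - δ) ^ 2) (ENNReal.ofReal p) (volume.restrict (Ioc s r)) :=
    memLp_restrict_Ioc_of_abs_rpow_le hsr hp (Continuous.aestronglyMeasurable (by fun_prop))
      (Continuous.intervalIntegrable (by fun_prop (disch := positivity)) _ _)
      fun t _ => (hsq t).le
  have hkernel : ∫ t in s..r, |(t - δ) ^ 2| ^ p
      = 1 / (2 * p + 1) * ((δ - s) ^ (2 * p + 1) + (r - δ) ^ (2 * p + 1)) := by
    simp only [hsq, integral_abs_sub_rpow hsδ hδr (by positivity : (0 : ℝ) ≤ 2 * p)]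
    ring
  have hwq : ∫ t in s..r, |w t| ^ q ≤ ∫ t in s..r, φ t := by
    have hint := (memLp_restrict_Ioc_of_abs_rpow_le hsr hq hw hφ hwφ).integrable_norm_rpow'
    simp only [ENNReal.toReal_ofReal hq.le, Real.norm_eq_abs] at hint
    simp only [intervalIntegral.integral_of_le hsr]
    exact setIntegral_mono_on hint ((intervalIntegrable_iff_integrableOn_Ioc_of_le hsr).1 hφ)
      measurableSet_Ioc hwφ
  calc |∫ t in s..r, (t - δ) ^ 2 * w t|
      ≤ (∫ t in s..r, |(t - δ) ^ 2| ^ p) ^ (1 / p) * (∫ t in s..r, |w t| ^ q) ^ (1 / q) :=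
        abs_intervalIntegral_mul_le_Lp_mul_Lq hsr hpq hu
          (memLp_restrict_Ioc_of_abs_rpow_le hsr hq hw hφ hwφ)
    _ ≤ _ := by
        rw [hkernel, Real.mul_rpow (by positivity) (by positivity)]
        gcongr
        exact intervalIntegral.integral_nonneg hsr fun t _ => by positivity

theorem integral_peano_kernel_mul_eq {g g' g'' : ℝ → ℝ} {c y d : ℝ} (hy0 : 0 ≤ y) (hy1 : y ≤ 1)
    (hg : ∀ t ∈ Icc (0 : ℝ) 1, HasDerivAt g (g' t) t)
    (hg' : ∀ t ∈ Icc (0 : ℝ) 1, HasDerivAt g' (g'' t) t)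
    (hg'' : IntervalIntegrable g'' volume 0 1) :
    (∫ t in (0 : ℝ)..y, (t - c) ^ 2 * g'' t) + ∫ t in y..(1 : ℝ), (t - d) ^ 2 * g'' t
      = ((c - y) ^ 2 - (d - y) ^ 2) * g' y + ((d - 1) ^ 2 * g' 1 - c ^ 2 * g' 0)
        + 2 * (c - d) * g y + 2 * (d - 1) * g 1 - 2 * c * g 0 + 2 * ∫ t in (0 : ℝ)..1, g t := by
  have hleft : uIcc 0 y ⊆ Icc (0 : ℝ) 1 := by
    rw [uIcc_of_le hy0]; exact Icc_subset_Icc le_rfl hy1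
  have hright : uIcc y 1 ⊆ Icc (0 : ℝ) 1 := by
    rw [uIcc_of_le hy1]; exact Icc_subset_Icc hy0 le_rfl
  have hunit : Icc (0 : ℝ) 1 = uIcc 0 1 := (uIcc_of_le zero_le_one).symm
  have hgc : ContinuousOn g (Icc 0 1) :=
    fun t ht => (hg t ht).continuousAt.continuousWithinAt
  rw [integral_sub_sq_mul_eq (fun t ht => hg t (hleft ht)) (fun t ht => hg' t (hleft ht))
      (hg''.mono_set (hunit ▸ hleft)),
    integral_sub_sq_mul_eq (fun t ht => hg t (hright ht)) (fun t ht => hg' t (hright ht))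
      (hg''.mono_set (hunit ▸ hright)),
    ← intervalIntegral.integral_add_adjacent_intervals
      ((hgc.mono hleft).intervalIntegrable) ((hgc.mono hright).intervalIntegrable)]
  ring

theorem HasDerivAt.comp_mul_add_one_sub_mul {F : ℝ → ℝ} {F' a b t : ℝ}
    (hF : HasDerivAt F F' (t * a + (1 - t) * b)) :
    HasDerivAt (fun t => F (t * a + (1 - t) * b)) ((a - b) * F') t := by
  have hline : HasDerivAt (fun t : ℝ => t * a + (1 - t) * b) (a - b) t :=
    ((hasDerivAt_id' t).mul_const a).add (((hasDerivAt_id' t).const_sub 1).mul_const b)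
      |>.congr_deriv (by ring)
  exact (hF.comp t hline).congr_deriv (mul_comm _ _)

theorem integral_comp_mul_add_one_sub_mul (F : ℝ → ℝ) {a b : ℝ} (hab : a ≠ b) :
    ∫ t in (0 : ℝ)..1, F (t * a + (1 - t) * b) = 1 / (b - a) * ∫ x in a..b, F x := by
  have hline (t : ℝ) : t * a + (1 - t) * b = (a - b) * t + b := by ring
  simp only [hline, intervalIntegral.integral_comp_mul_add F (sub_ne_zero.2 hab), mul_zero,
    mul_one, zero_add, sub_add_cancel, intervalIntegral.integral_symm a b, smul_eq_mul]
  field_simp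
  ring

theorem mul_add_one_sub_mul_mem_uIcc {a b t : ℝ} (ht : t ∈ Icc (0 : ℝ) 1) :
    t * a + (1 - t) * b ∈ uIcc a b := by
  simpa only [smul_eq_mul] using
    convex_uIcc a b left_mem_uIcc right_mem_uIcc ht.1 (sub_nonneg.2 ht.2) (add_sub_cancel t 1)

theorem aestronglyMeasurable_restrict_comp_of_hasDerivAt {F F' g : ℝ → ℝ} {μ : Measure ℝ}
    {s : Set ℝ} (hg : Measurable g) (hs : MeasurableSet s)
    (hF : ∀ t ∈ s, HasDerivAt F (F' (g t)) (g t)) :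
    AEStronglyMeasurable (fun t => F' (g t)) (μ.restrict s) := by
  refine ((measurable_deriv F).comp hg).aestronglyMeasurable.congr ?_
  filter_upwards [ae_restrict_mem hs] with t ht
  exact (hF t ht).deriv

theorem quadrature_error_eq_integral_peano_kernel {f f' f'' : ℝ → ℝ} {a b c y d : ℝ} (hab : a ≠ b)
    (hf' : ∀ x ∈ uIcc a b, HasDerivAt f (f' x) x) (hf'' : ∀ x ∈ uIcc a b, HasDerivAt f' (f'' x) x)
    (hint : IntervalIntegrable (fun t => f'' (t * a + (1 - t) * b)) volume 0 1)
    (hy0 : 0 ≤ y) (hy1 : y ≤ 1) :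
    (((c - y) ^ 2 - (d - y) ^ 2) / 2) * (a - b) * f' (y * a + (1 - y) * b)
      + (((d - 1) ^ 2 * f' a - c ^ 2 * f' b) / 2) * (a - b)
      + (c - d) * f (y * a + (1 - y) * b)
      + (d - 1) * f a - c * f b
      + (1 / (b - a)) * ∫ x in a..b, f x
    = (a - b) ^ 2 / 2 * ((∫ t in (0 : ℝ)..y, (t - c) ^ 2 * f'' (t * a + (1 - t) * b))
        + ∫ t in y..(1 : ℝ), (t - d) ^ 2 * f'' (t * a + (1 - t) * b)) := by
  have key := integral_peano_kernel_mul_eq (c := c) (d := d) hy0 hy1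
    (fun t ht => (hf' _ (mul_add_one_sub_mul_mem_uIcc ht)).comp_mul_add_one_sub_mul)
    (fun t ht => ((hf'' _ (mul_add_one_sub_mul_mem_uIcc ht)).comp_mul_add_one_sub_mul).const_mul
      (a - b))
    ((hint.const_mul (a - b)).const_mul (a - b))
  have hpull (δ s r : ℝ) :
      ∫ t in s..r, (t - δ) ^ 2 * ((a - b) * ((a - b) * f'' (t * a + (1 - t) * b)))
        = (a - b) ^ 2 * ∫ t in s..r, (t - δ) ^ 2 * f'' (t * a + (1 - t) * b) := by
    rw [← intervalIntegral.integral_const_mul]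
    exact intervalIntegral.integral_congr fun t _ => by ring
  simp only [hpull, integral_comp_mul_add_one_sub_mul f hab, zero_mul, sub_zero, one_mul, zero_add,
    sub_self, add_zero] at key
  linear_combination (-1 / 2 : ℝ) * key

theorem stmt_4_general (f f' f'' : ℝ → ℝ) (a b u v c y d p q : ℝ) (hab : a < b)
(hua : u < a) (hbv : b < v)
    (hf' : ∀ x ∈ Set.Ioo u v, HasDerivAt f (f' x) x)
    (hf'' : ∀ x ∈ Set.Ioo u v, HasDerivAt f' (f'' x) x)
    (hc : 0 ≤ c) (hcy : c ≤ y) (hyd : y ≤ d) (hd : d ≤ 1)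
    (hy0 : 0 < y) (hy1 : y < 1)
    (hp : 1 < p) (hpq : 1 / p + 1 / q = 1)
    (hconv : ConvexOn ℝ (Set.Icc a b) (fun x => |f'' x| ^ q)) :
|(((c - y) ^ 2 - (d - y) ^ 2) / 2) * (a - b) * f' (y * a + (1 - y) * b)
      + (((d - 1) ^ 2 * f' a - c ^ 2 * f' b) / 2) * (a - b)
      + (c - d) * f (y * a + (1 - y) * b)
      + (d - 1) * f a - c * f b
      + (1 / (b - a)) * ∫ x in a..b, f x|
    ≤ ((b - a) ^ 2 / 2) * (1 / (2 * p + 1)) ^ (1 / p) *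
        ((c ^ (2 * p + 1) + (y - c) ^ (2 * p + 1)) ^ (1 / p) *
            ((y ^ 2 * |f'' a| ^ q + (2 * y - y ^ 2) * |f'' b| ^ q) / 2) ^ (1 / q)
          + ((d - y) ^ (2 * p + 1) + (1 - d) ^ (2 * p + 1)) ^ (1 / p) *
            (((1 - y ^ 2) * |f'' a| ^ q + (1 - y) ^ 2 * |f'' b| ^ q) / 2) ^ (1 / q)) := by
  have hpq' : p.HolderConjugate q :=
    Real.holderConjugate_iff.2 ⟨hp, by simpa only [one_div] using hpq⟩
  have hdom : uIcc a b ⊆ Ioo u v := uIcc_of_le hab.le ▸ Icc_subset_Ioo hua hbv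
  set h := fun t => f'' (t * a + (1 - t) * b)
  set φ := fun t : ℝ => t * |f'' a| ^ q + (1 - t) * |f'' b| ^ q
  have hφ (s r : ℝ) : IntervalIntegrable φ volume s r :=
    Continuous.intervalIntegrable (by fun_prop) s r
  have hhφ : ∀ t ∈ Icc (0 : ℝ) 1, |h t| ^ q ≤ φ t := fun t ht => by
    simpa only [smul_eq_mul] using hconv.2 (left_mem_Icc.2 hab.le) (right_mem_Icc.2 hab.le) ht.1
      (sub_nonneg.2 ht.2) (add_sub_cancel t 1)
  have hmeas : AEStronglyMeasurable h (volume.restrict (Ioc 0 1)) :=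
    aestronglyMeasurable_restrict_comp_of_hasDerivAt (by fun_prop) measurableSet_Ioc
      fun t ht => hf'' _ (hdom (mul_add_one_sub_mul_mem_uIcc (Ioc_subset_Icc_self ht)))
  have hint : IntervalIntegrable h volume 0 1 :=
    intervalIntegrable_of_abs_rpow_le zero_le_one hpq'.symm.lt.le hmeas (hφ 0 1)
      fun t ht => hhφ t (Ioc_subset_Icc_self ht)
  have hleft := abs_integral_sub_sq_mul_le hc hcy hpq'
    (hmeas.mono_measure (Measure.restrict_mono (Ioc_subset_Ioc le_rfl hy1.le) le_rfl)) (hφ 0 y)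
    fun t ht => hhφ t ⟨ht.1.le, ht.2.trans hy1.le⟩
  have hright := abs_integral_sub_sq_mul_le hyd hd hpq'
    (hmeas.mono_measure (Measure.restrict_mono (Ioc_subset_Ioc hy0.le le_rfl) le_rfl)) (hφ y 1)
    fun t ht => hhφ t ⟨hy0.le.trans ht.1.le, ht.2⟩
  simp only [φ, integral_mul_add_one_sub_mul, sub_zero, zero_pow two_ne_zero, one_pow,
    show 2 * (1 - y) - (1 - y ^ 2) = (1 - y) ^ 2 by ring] at hleft hright
  rw [quadrature_error_eq_integral_peano_kernel hab.ne (fun x hx => hf' x (hdom hx))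
    (fun x hx => hf'' x (hdom hx)) hint hy0.le hy1.le]
  calc _ ≤ (b - a) ^ 2 / 2 * (|∫ t in (0 : ℝ)..y, (t - c) ^ 2 * h t|
          + |∫ t in y..(1 : ℝ), (t - d) ^ 2 * h t|) := by
        rw [abs_mul, abs_of_nonneg (by positivity), sub_sq_comm a b]
        gcongr
        exact abs_add_le _ _
    _ ≤ _ := by grw [hleft, hright]; exact le_of_eq (by ring)

/-- Theorem 10 of the paper: Hölder-type bound for |E(f;a,b;c,y,d)| with
|f''|^q convex, 1/p + 1/q = 1, p, q > 1. -/
theorem stmt_4 (f f' f'' : ℝ → ℝ) (a b u v c y d p q : ℝ) (hab : a < b)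
(hua : u < a) (hbv : b < v)
    (hf' : ∀ x ∈ Set.Ioo u v, HasDerivAt f (f' x) x)
    (hf'' : ∀ x ∈ Set.Ioo u v, HasDerivAt f' (f'' x) x)
    (hint : IntervalIntegrable f'' MeasureTheory.volume a b)
    (hc : 0 ≤ c) (hcy : c ≤ y) (hyd : y ≤ d) (hd : d ≤ 1)
    (hy0 : 0 < y) (hy1 : y < 1)
    (hp : 1 < p) (hq : 1 < q) (hpq : 1 / p + 1 / q = 1)
    (hconv : ConvexOn ℝ (Set.Icc a b) (fun x => |f'' x| ^ q)) :
|(((c - y) ^ 2 - (d - y) ^ 2) / 2) * (a - b) * f' (y * a + (1 - y) * b)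
      + (((d - 1) ^ 2 * f' a - c ^ 2 * f' b) / 2) * (a - b)
      + (c - d) * f (y * a + (1 - y) * b)
      + (d - 1) * f a - c * f b
      + (1 / (b - a)) * ∫ x in a..b, f x|
    ≤ ((b - a) ^ 2 / 2) * (1 / (2 * p + 1)) ^ (1 / p) *
        ((c ^ (2 * p + 1) + (y - c) ^ (2 * p + 1)) ^ (1 / p) *
            ((y ^ 2 * |f'' a| ^ q + (2 * y - y ^ 2) * |f'' b| ^ q) / 2) ^ (1 / q)
          + ((d - y) ^ (2 * p + 1) + (1 - d) ^ (2 * p + 1)) ^ (1 / p) *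
            (((1 - y ^ 2) * |f'' a| ^ q + (1 - y) ^ 2 * |f'' b| ^ q) / 2) ^ (1 / q)) :=
  stmt_4_general f f' f'' a b u v c y d p q hab hua hbv hf' hf'' hc hcy hyd hd hy0 hy1 hp hpq hconv
end

section
/- Let a < b be real numbers and let f : ℝ → ℝ be twice differentiable on an open interval containing [a,b] with f'' Lebesgue integrable on [a,b]. Let c, y, d be real numbers with 0 ≤ c ≤ y ≤ d ≤ 1 and 0 < y < 1, and let q ≥ 1. If the function x ↦ |f''(x)|^q is convex on [a,b], then |E(f;a,b;c,y,d)| ≤ ((b−a)²/6) · ( (c³ − (c−y)³)^(1−1/q) · ((M·|f''(a)|^q + N·|f''(b)|^q)/4)^(1/q) + ((d−y)³ − (d−1)³)^(1−1/q) · ((P·|f''(a)|^q + Q·|f''(b)|^q)/4)^(1/q) ), where M = c⁴ − (c−y)³·(c+3y), N = 4c³ − c⁴ + (c−y)³·(c+3y−4), P = (d−y)³·(d+3y) − (d−1)³·(d+3), and Q = (d−y)³·(4−d−3y) + (d−1)⁴. -/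
/-!
Substituting `x = t a + (1 - t) b` and integrating by parts twice writes the error as
`(b - a)² / 6 · ∫₀¹ K(t) f''(t a + (1 - t) b) dt` with the Peano kernel `K(t) = 3 (t - c)²` on
`[0, y]` and `K(t) = 3 (t - d)²` on `[y, 1]`. Convexity of `|f''|^q` gives
`|f''(t a + (1 - t) b)| ≤ (t |f''(a)|^q + (1 - t) |f''(b)|^q)^(1/q)`, and Hölder's inequality for
the measure `K(t) dt` on each of the two pieces turns this into the product of a power of the
zeroth moment of `K` and a power of its moment against the affine function; these moments are the
polynomials of the bound.
-/

open MeasureTheory Set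

lemma memLp_restrict_Ioc_of_continuousOn {F : ℝ → ℝ} {s t : ℝ} (hF : ContinuousOn F (Icc s t))
    (p : ENNReal) : MemLp F p (volume.restrict (Ioc s t)) := by
  obtain ⟨C, hC⟩ := isCompact_Icc.exists_bound_of_continuousOn hF
  exact MemLp.of_bound ((hF.mono Ioc_subset_Icc_self).aestronglyMeasurable measurableSet_Ioc) C
    ((ae_restrict_iff' measurableSet_Ioc).2 (.of_forall fun x hx => hC x (Ioc_subset_Icc_self hx)))

lemma integral_mul_rpow_le {s t r : ℝ} {w h : ℝ → ℝ} (hst : s ≤ t) (hr0 : 0 ≤ r) (hr1 : r ≤ 1)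
    (hw : ContinuousOn w (Icc s t)) (hh : ContinuousOn h (Icc s t))
    (hw0 : ∀ x ∈ Icc s t, 0 ≤ w x) (hh0 : ∀ x ∈ Icc s t, 0 ≤ h x) :
    ∫ x in s..t, w x * h x ^ r ≤
      (∫ x in s..t, w x) ^ (1 - r) * (∫ x in s..t, w x * h x) ^ r := by
  rcases hr0.eq_or_lt with rfl | hr0
  · simp
  rcases hr1.eq_or_lt with rfl | hr1
  · simp
  have hpq := Real.HolderConjugate.one_sub_inv_inv hr0 hr1
  have hw0' : ∀ x ∈ Ioc s t, 0 ≤ w x := fun x hx => hw0 x (Ioc_subset_Icc_self hx)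
  have hwh0 : ∀ x ∈ Ioc s t, 0 ≤ w x * h x :=
    fun x hx => mul_nonneg (hw0' x hx) (hh0 x (Ioc_subset_Icc_self hx))
  have key := integral_mul_le_Lp_mul_Lq_of_nonneg hpq
    ((ae_restrict_iff' measurableSet_Ioc).2
      (.of_forall fun x hx => Real.rpow_nonneg (hw0' x hx) (1 - r)))
    ((ae_restrict_iff' measurableSet_Ioc).2
      (.of_forall fun x hx => Real.rpow_nonneg (hwh0 x hx) r))
    (memLp_restrict_Ioc_of_continuousOn (hw.rpow_const fun x _ => Or.inr (by linarith)) _)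
    (memLp_restrict_Ioc_of_continuousOn ((hw.mul hh).rpow_const fun x _ => Or.inr hr0.le) _)
  have hprod : ∫ x in Ioc s t, w x ^ (1 - r) * (w x * h x) ^ r = ∫ x in Ioc s t, w x * h x ^ r :=
    setIntegral_congr_fun measurableSet_Ioc fun x hx => by
      rw [Real.mul_rpow (hw0' x hx) (hh0 x (Ioc_subset_Icc_self hx)), ← mul_assoc,
        ← Real.rpow_add' (hw0' x hx) (by simp), sub_add_cancel, Real.rpow_one]
  have hleft : ∫ x in Ioc s t, (w x ^ (1 - r)) ^ (1 - r)⁻¹ = ∫ x in Ioc s t, w x :=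
    setIntegral_congr_fun measurableSet_Ioc fun x hx => by
      rw [← Real.rpow_mul (hw0' x hx), mul_inv_cancel₀ (by linarith), Real.rpow_one]
  have hright : ∫ x in Ioc s t, ((w x * h x) ^ r) ^ r⁻¹ = ∫ x in Ioc s t, w x * h x :=
    setIntegral_congr_fun measurableSet_Ioc fun x hx => by
      rw [← Real.rpow_mul (hwh0 x hx), mul_inv_cancel₀ hr0.ne', Real.rpow_one]
  simp only [intervalIntegral.integral_of_le hst]
  simpa only [hprod, hleft, hright, one_div, inv_inv] using key

lemma integral_three_mul_sq_sub (r s e : ℝ) :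
    ∫ t in r..s, 3 * (t - e) ^ 2 = (s - e) ^ 3 - (r - e) ^ 3 := by
  simp only [intervalIntegral.integral_const_mul,
    intervalIntegral.integral_comp_sub_right (fun t => t ^ 2), integral_pow]
  ring

lemma integral_three_mul_sq_sub_mul_affine (r s e A B : ℝ) :
    ∫ t in r..s, 3 * (t - e) ^ 2 * (t * A + (1 - t) * B) =
      B * ((s - e) ^ 3 - (r - e) ^ 3)
        + (A - B) * ((s - e) ^ 3 * (3 * s + e) - (r - e) ^ 3 * (3 * r + e)) / 4 := by
  have hderiv : ∀ t ∈ uIcc r s, HasDerivAt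
      (fun t => B * (t - e) ^ 3 + (A - B) * ((t - e) ^ 3 * (3 * t + e)) / 4)
      (3 * (t - e) ^ 2 * (t * A + (1 - t) * B)) t := by
    intro t _
    refine (((((hasDerivAt_id' t).sub_const e).pow 3).const_mul B).add
      (((((hasDerivAt_id' t).sub_const e).pow 3).mul
        (((hasDerivAt_id' t).const_mul 3).add_const e)).const_mul (A - B) |>.div_const 4)
      ).congr_deriv ?_
    norm_num
    ring
  rw [intervalIntegral.integral_eq_sub_of_hasDerivAt hderiv
    ((by fun_prop : Continuous _).intervalIntegrable r s)]
  ring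

lemma integral_sq_sub_div_two_mul_eq {g g' g'' : ℝ → ℝ} {r s e : ℝ}
    (hg : ∀ x ∈ uIcc r s, HasDerivAt g (g' x) x) (hg' : ∀ x ∈ uIcc r s, HasDerivAt g' (g'' x) x)
    (hint : IntervalIntegrable g'' volume r s) :
    ∫ t in r..s, (t - e) ^ 2 / 2 * g'' t =
      (s - e) ^ 2 / 2 * g' s - (r - e) ^ 2 / 2 * g' r - ((s - e) * g s - (r - e) * g r)
        + ∫ t in r..s, g t := by
  have hg'_cont : ContinuousOn g' (uIcc r s) :=
    fun x hx => (hg' x hx).continuousAt.continuousWithinAt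
  have hkernel : ∀ x ∈ uIcc r s, HasDerivAt (fun t => (t - e) ^ 2 / 2) (x - e) x := fun x _ => by
    refine ((((hasDerivAt_id' x).sub_const e).pow 2).div_const 2).congr_deriv ?_
    norm_num
  rw [intervalIntegral.integral_mul_deriv_eq_deriv_mul hkernel hg'
      ((by fun_prop : Continuous fun t : ℝ => t - e).intervalIntegrable r s) hint,
    intervalIntegral.integral_mul_deriv_eq_deriv_mul (fun x _ => (hasDerivAt_id' x).sub_const e) hg
      intervalIntegrable_const hg'_cont.intervalIntegrable]
  simp only [one_mul]
  ring

lemma convexCombo_mem_Icc {a b t : ℝ} (hab : a ≤ b) (ht : t ∈ Icc (0 : ℝ) 1) :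
    t * a + (1 - t) * b ∈ Icc a b := by
  obtain ⟨ht0, ht1⟩ := ht
  constructor <;> nlinarith

lemma intervalIntegrable_comp_convexCombo {φ : ℝ → ℝ} {a b : ℝ} (hab : a ≠ b)
    (hφ : IntervalIntegrable φ volume a b) :
    IntervalIntegrable (fun t => φ (t * a + (1 - t) * b)) volume 0 1 := by
  have h := (hφ.comp_add_right b).comp_mul_left (c := a - b)
  simp only [sub_self, zero_div, div_self (sub_ne_zero.2 hab)] at h
  simpa only [show ∀ t, t * a + (1 - t) * b = (a - b) * t + b from fun t => by ring] using h.symm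

lemma integral_comp_convexCombo (φ : ℝ → ℝ) {a b : ℝ} (hab : a ≠ b) :
    ∫ t in (0 : ℝ)..1, φ (t * a + (1 - t) * b) = 1 / (b - a) * ∫ x in a..b, φ x := by
  simp only [show ∀ t, t * a + (1 - t) * b = (a - b) * t + b from fun t => by ring]
  rw [intervalIntegral.integral_comp_mul_add φ (sub_ne_zero.2 hab), mul_zero, zero_add, mul_one,
    sub_add_cancel, intervalIntegral.integral_symm, smul_eq_mul, one_div, mul_neg, ← neg_mul,
    ← inv_neg, neg_sub]

lemma abs_le_rpow_of_convexOn_abs_rpow {φ : ℝ → ℝ} {a b q t : ℝ} (hab : a ≤ b) (hq : 0 < q)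
    (hconv : ConvexOn ℝ (Icc a b) (fun x => |φ x| ^ q)) (ht : t ∈ Icc (0 : ℝ) 1) :
    |φ (t * a + (1 - t) * b)| ≤ (t * |φ a| ^ q + (1 - t) * |φ b| ^ q) ^ (1 / q) := by
  have hle := hconv.2 (left_mem_Icc.2 hab) (right_mem_Icc.2 hab) ht.1 (sub_nonneg.2 ht.2)
    (add_sub_cancel t 1)
  simp only [smul_eq_mul] at hle
  calc |φ (t * a + (1 - t) * b)| = (|φ (t * a + (1 - t) * b)| ^ q) ^ (1 / q) := by
        rw [one_div, Real.rpow_rpow_inv (abs_nonneg _) hq.ne']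
    _ ≤ _ := by gcongr

lemma abs_integral_mul_comp_convexCombo_le {φ w : ℝ → ℝ} {a b r s q : ℝ} (hab : a < b)
    (hr : 0 ≤ r) (hrs : r ≤ s) (hs : s ≤ 1) (hq : 1 ≤ q)
    (hconv : ConvexOn ℝ (Icc a b) (fun x => |φ x| ^ q)) (hφ : IntervalIntegrable φ volume a b)
    (hw : ContinuousOn w (Icc r s)) (hw0 : ∀ t ∈ Icc r s, 0 ≤ w t) :
    |∫ t in r..s, w t * φ (t * a + (1 - t) * b)| ≤
      (∫ t in r..s, w t) ^ (1 - 1 / q) *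
        (∫ t in r..s, w t * (t * |φ a| ^ q + (1 - t) * |φ b| ^ q)) ^ (1 / q) := by
  have hsub : Icc r s ⊆ Icc 0 1 := Icc_subset_Icc hr hs
  set h : ℝ → ℝ := fun t => t * |φ a| ^ q + (1 - t) * |φ b| ^ q
  have hh0 : ∀ t ∈ Icc r s, 0 ≤ h t := fun t ht => by
    have := hsub ht
    exact add_nonneg (mul_nonneg this.1 (by positivity))
      (mul_nonneg (sub_nonneg.2 this.2) (by positivity))
  have hφσ : IntervalIntegrable (fun t => φ (t * a + (1 - t) * b)) volume r s :=
    (intervalIntegrable_comp_convexCombo hab.ne hφ).mono_set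
      (by simpa only [uIcc_of_le hrs, uIcc_of_le zero_le_one] using hsub)
  have hwI : ContinuousOn w (uIcc r s) := uIcc_of_le hrs ▸ hw
  calc |∫ t in r..s, w t * φ (t * a + (1 - t) * b)|
      ≤ ∫ t in r..s, |w t * φ (t * a + (1 - t) * b)| :=
        intervalIntegral.abs_integral_le_integral_abs hrs
    _ = ∫ t in r..s, w t * |φ (t * a + (1 - t) * b)| :=
        intervalIntegral.integral_congr fun t ht => by
          simp only [abs_mul, abs_of_nonneg (hw0 t (uIcc_of_le hrs ▸ ht))]
    _ ≤ ∫ t in r..s, w t * h t ^ (1 / q) := by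
        refine intervalIntegral.integral_mono_on hrs (hφσ.abs.continuousOn_mul hwI)
          (hwI.mul ?_).intervalIntegrable fun t ht => ?_
        · exact ((by fun_prop : Continuous h).rpow_const
            fun _ => Or.inr (by positivity)).continuousOn
        · exact mul_le_mul_of_nonneg_left
            (abs_le_rpow_of_convexOn_abs_rpow hab.le (by linarith) hconv (hsub ht)) (hw0 t ht)
    _ ≤ _ := integral_mul_rpow_le hrs (by positivity) (div_le_one_of_le₀ hq (by linarith)) hw
        (by fun_prop : Continuous h).continuousOn hw0 hh0

-- The Peano kernel `(t - e)² / 2` is scaled by 6 so that its moments are exactly the polynomials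
-- appearing in the bound.
lemma error_eq_integral_kernel {f f' f'' : ℝ → ℝ} {a b c y d : ℝ} (hab : a < b)
    (hf' : ∀ x ∈ Icc a b, HasDerivAt f (f' x) x) (hf'' : ∀ x ∈ Icc a b, HasDerivAt f' (f'' x) x)
    (hint : IntervalIntegrable f'' volume a b) (hy0 : 0 ≤ y) (hy1 : y ≤ 1) :
    (((c - y) ^ 2 - (d - y) ^ 2) / 2) * (a - b) * f' (y * a + (1 - y) * b)
      + (((d - 1) ^ 2 * f' a - c ^ 2 * f' b) / 2) * (a - b)
      + (c - d) * f (y * a + (1 - y) * b)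
      + (d - 1) * f a - c * f b
      + (1 / (b - a)) * ∫ x in a..b, f x
    = (b - a) ^ 2 / 6 * ((∫ t in (0 : ℝ)..y, 3 * (t - c) ^ 2 * f'' (t * a + (1 - t) * b))
        + ∫ t in y..(1 : ℝ), 3 * (t - d) ^ 2 * f'' (t * a + (1 - t) * b)) := by
  set σ : ℝ → ℝ := fun t => t * a + (1 - t) * b
  have hσ : ∀ t, HasDerivAt σ (a - b) t := fun t => by
    refine (((hasDerivAt_id' t).mul_const a).add
      (((hasDerivAt_id' t).const_sub 1).mul_const b)).congr_deriv ?_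
    ring
  have hg : ∀ t ∈ Icc (0 : ℝ) 1, HasDerivAt (fun t => f (σ t)) ((a - b) * f' (σ t)) t :=
    fun t ht => ((hf' _ (convexCombo_mem_Icc hab.le ht)).comp t (hσ t)).congr_deriv (mul_comm _ _)
  have hg' : ∀ t ∈ Icc (0 : ℝ) 1,
      HasDerivAt (fun t => (a - b) * f' (σ t)) ((a - b) ^ 2 * f'' (σ t)) t := fun t ht =>
    (((hf'' _ (convexCombo_mem_Icc hab.le ht)).comp t (hσ t)).const_mul (a - b)).congr_deriv
      (by ring)
  have hg'' : IntervalIntegrable (fun t => (a - b) ^ 2 * f'' (σ t)) volume 0 1 :=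
    (intervalIntegrable_comp_convexCombo hab.ne hint).const_mul _
  have hsub₁ : uIcc 0 y ⊆ Icc (0 : ℝ) 1 := uIcc_of_le hy0 ▸ Icc_subset_Icc le_rfl hy1
  have hsub₂ : uIcc y 1 ⊆ Icc (0 : ℝ) 1 := uIcc_of_le hy1 ▸ Icc_subset_Icc hy0 le_rfl
  have hsub : ∀ {r s}, uIcc r s ⊆ Icc (0 : ℝ) 1 → uIcc r s ⊆ uIcc 0 1 :=
    fun h => uIcc_of_le (zero_le_one' ℝ) ▸ h
  have hkernel : ∀ r s e, ∫ t in r..s, (t - e) ^ 2 / 2 * ((a - b) ^ 2 * f'' (σ t))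
      = (b - a) ^ 2 / 6 * ∫ t in r..s, 3 * (t - e) ^ 2 * f'' (σ t) := fun r s e => by
    rw [← intervalIntegral.integral_const_mul]
    congr 1 with t
    ring
  have hg_int : IntervalIntegrable (fun t => f (σ t)) volume 0 1 :=
    (ContinuousOn.intervalIntegrable fun t ht =>
      (hg t (uIcc_of_le (zero_le_one' ℝ) ▸ ht)).continuousAt.continuousWithinAt)
  have hsplit := intervalIntegral.integral_add_adjacent_intervals
    (hg_int.mono_set (hsub hsub₁)) (hg_int.mono_set (hsub hsub₂))
  rw [integral_comp_convexCombo f hab.ne] at hsplit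
  rw [mul_add, ← hkernel, ← hkernel,
    integral_sq_sub_div_two_mul_eq (fun t ht => hg t (hsub₁ ht)) (fun t ht => hg' t (hsub₁ ht))
      (hg''.mono_set (hsub hsub₁)),
    integral_sq_sub_div_two_mul_eq (fun t ht => hg t (hsub₂ ht)) (fun t ht => hg' t (hsub₂ ht))
      (hg''.mono_set (hsub hsub₂))]
  simp only [σ, zero_mul, one_mul, sub_zero, sub_self, zero_add, add_zero]
  linear_combination -hsplit

theorem stmt_7_general (f f' f'' : ℝ → ℝ) (a b u v c y d q : ℝ) (hab : a < b)
(hua : u < a) (hbv : b < v)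
    (hf' : ∀ x ∈ Set.Ioo u v, HasDerivAt f (f' x) x)
    (hf'' : ∀ x ∈ Set.Ioo u v, HasDerivAt f' (f'' x) x)
    (hint : IntervalIntegrable f'' MeasureTheory.volume a b)
    (hy0 : 0 < y) (hy1 : y < 1)
    (hq : 1 ≤ q)
    (hconv : ConvexOn ℝ (Set.Icc a b) (fun x => |f'' x| ^ q)) :
|(((c - y) ^ 2 - (d - y) ^ 2) / 2) * (a - b) * f' (y * a + (1 - y) * b)
      + (((d - 1) ^ 2 * f' a - c ^ 2 * f' b) / 2) * (a - b)
      + (c - d) * f (y * a + (1 - y) * b)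
      + (d - 1) * f a - c * f b
      + (1 / (b - a)) * ∫ x in a..b, f x|
    ≤ ((b - a) ^ 2 / 6) *
        ((c ^ 3 - (c - y) ^ 3) ^ (1 - 1 / q) *
            (((c ^ 4 - (c - y) ^ 3 * (c + 3 * y)) * |f'' a| ^ q
              + (4 * c ^ 3 - c ^ 4 + (c - y) ^ 3 * (c + 3 * y - 4)) * |f'' b| ^ q) / 4) ^ (1 / q)
          + ((d - y) ^ 3 - (d - 1) ^ 3) ^ (1 - 1 / q) *
            ((((d - y) ^ 3 * (d + 3 * y) - (d - 1) ^ 3 * (d + 3)) * |f'' a| ^ q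
              + ((d - y) ^ 3 * (4 - d - 3 * y) + (d - 1) ^ 4) * |f'' b| ^ q) / 4) ^ (1 / q)) := by
  have hIcc : Icc a b ⊆ Ioo u v := Icc_subset_Ioo hua hbv
  rw [error_eq_integral_kernel hab (fun x hx => hf' x (hIcc hx)) (fun x hx => hf'' x (hIcc hx))
    hint hy0.le hy1.le, abs_mul, abs_of_nonneg (by positivity)]
  refine mul_le_mul_of_nonneg_left ((abs_add_le _ _).trans (add_le_add ?_ ?_)) (by positivity)
  · have hbound := abs_integral_mul_comp_convexCombo_le hab le_rfl hy0.le hy1.le hq hconv hint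
      (w := fun t => 3 * (t - c) ^ 2) (by fun_prop) (fun t _ => by positivity)
    rw [integral_three_mul_sq_sub, integral_three_mul_sq_sub_mul_affine] at hbound
    exact hbound.trans_eq (by congr 2 <;> ring)
  · have hbound := abs_integral_mul_comp_convexCombo_le hab hy0.le hy1.le le_rfl hq hconv hint
      (w := fun t => 3 * (t - d) ^ 2) (by fun_prop) (fun t _ => by positivity)
    rw [integral_three_mul_sq_sub, integral_three_mul_sq_sub_mul_affine] at hbound
    exact hbound.trans_eq (by congr 2 <;> ring)

/-- Theorem 11 of the paper: power-mean-type bound for |E(f;a,b;c,y,d)| with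
|f''|^q convex, q ≥ 1; the exponent 1 − 1/q plays the role of 1/p. -/
theorem stmt_7 (f f' f'' : ℝ → ℝ) (a b u v c y d q : ℝ) (hab : a < b)
(hua : u < a) (hbv : b < v)
    (hf' : ∀ x ∈ Set.Ioo u v, HasDerivAt f (f' x) x)
    (hf'' : ∀ x ∈ Set.Ioo u v, HasDerivAt f' (f'' x) x)
    (hint : IntervalIntegrable f'' MeasureTheory.volume a b)
    (hc : 0 ≤ c) (hcy : c ≤ y) (hyd : y ≤ d) (hd : d ≤ 1)
    (hy0 : 0 < y) (hy1 : y < 1)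
    (hq : 1 ≤ q)
    (hconv : ConvexOn ℝ (Set.Icc a b) (fun x => |f'' x| ^ q)) :
|(((c - y) ^ 2 - (d - y) ^ 2) / 2) * (a - b) * f' (y * a + (1 - y) * b)
      + (((d - 1) ^ 2 * f' a - c ^ 2 * f' b) / 2) * (a - b)
      + (c - d) * f (y * a + (1 - y) * b)
      + (d - 1) * f a - c * f b
      + (1 / (b - a)) * ∫ x in a..b, f x|
    ≤ ((b - a) ^ 2 / 6) *
        ((c ^ 3 - (c - y) ^ 3) ^ (1 - 1 / q) *
            (((c ^ 4 - (c - y) ^ 3 * (c + 3 * y)) * |f'' a| ^ q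
              + (4 * c ^ 3 - c ^ 4 + (c - y) ^ 3 * (c + 3 * y - 4)) * |f'' b| ^ q) / 4) ^ (1 / q)
          + ((d - y) ^ 3 - (d - 1) ^ 3) ^ (1 - 1 / q) *
            ((((d - y) ^ 3 * (d + 3 * y) - (d - 1) ^ 3 * (d + 3)) * |f'' a| ^ q
              + ((d - y) ^ 3 * (4 - d - 3 * y) + (d - 1) ^ 4) * |f'' b| ^ q) / 4) ^ (1 / q)) :=
  stmt_7_general f f' f'' a b u v c y d q hab hua hbv hf' hf'' hint hy0 hy1 hq hconv
end

section
/- Let a, b be real numbers with 0 < a < b and let n be a natural number with n > 2. Then |L_n^n(a,b) − A(a,b)^n| ≤ n·(n−1)·((b−a)²/48)·(a^(n−2) + b^(n−2)), where L_n^n(a,b) = (b^(n+1) − a^(n+1))/((n+1)·(b−a)) and A(a,b) = (a+b)/2. -/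
/-!
Write `m = (a + b) / 2` and `f x = x ^ n`, so that `L_n^n(a, b)` is the mean of `f` over `[a, b]`.
The lower bound `f m ≤ L_n^n` is the left Hermite–Hadamard inequality: `f` lies above its tangent
at `m`, whose mean is `f m`. For the upper bound, `f'' = n (n - 1) x ^ (n - 2)` is convex, hence
below its chord on `[a, b]`; the cubic `p` with `p(m) = f(m)`, `p'(m) = f'(m)` and `p''` equal to that
chord therefore dominates `f` on `[a, b]`. The odd powers of `x - m` average to zero, so the mean
of `p` is `f m + (f'' a + f'' b) (b - a) ^ 2 / 48`.
-/

open Set intervalIntegral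

theorem ConvexOn.add_mul_sub_le_of_hasDerivAt {s : Set ℝ} {f : ℝ → ℝ} {f' x y : ℝ}
    (hf : ConvexOn ℝ s f) (hx : x ∈ s) (hy : y ∈ s) (hd : HasDerivAt f f' x) :
    f x + f' * (y - x) ≤ f y := by
  rcases lt_trichotomy x y with hxy | rfl | hyx
  · have := hf.le_slope_of_hasDerivAt hx hy hxy hd
    rw [slope_def_field, le_div_iff₀ (sub_pos.2 hxy)] at this
    linarith
  · simp
  · have := hf.slope_le_of_hasDerivAt hy hx hyx hd
    rw [slope_def_field, div_le_iff₀ (sub_pos.2 hyx)] at this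
    linarith

theorem ConvexOn.le_add_slope_mul_sub {f : ℝ → ℝ} {a b y : ℝ} (hf : ConvexOn ℝ (Icc a b) f)
    (hy : y ∈ Icc a b) : f y ≤ f a + slope f a b * (y - a) := by
  rcases hy.1.eq_or_lt with rfl | hay
  · simp
  have hb : b ∈ Icc a b := ⟨hay.le.trans hy.2, le_rfl⟩
  have := hf.secant_mono (left_mem_Icc.2 hb.1) hy hb hay.ne' (hay.trans_le hy.2).ne' hy.2
  rw [div_le_iff₀ (sub_pos.2 hay), ← slope_def_field] at this
  linarith

theorem hasDerivAt_cubic (c₀ c₁ c₂ c₃ m x : ℝ) :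
    HasDerivAt (fun x ↦ c₀ + c₁ * (x - m) + c₂ * (x - m) ^ 2 + c₃ * (x - m) ^ 3)
      (c₁ + 2 * c₂ * (x - m) + 3 * c₃ * (x - m) ^ 2) x := by
  have h := (hasDerivAt_id' x).sub_const m
  refine ((((h.const_mul c₁).const_add c₀).add ((h.pow 2).const_mul c₂)).add
    ((h.pow 3).const_mul c₃)).congr_deriv ?_
  push_cast
  ring

theorem integral_cubic_sub_midpoint (a b c₀ c₁ c₂ c₃ : ℝ) :
    ∫ x in a..b, (c₀ + c₁ * (x - (a + b) / 2) + c₂ * (x - (a + b) / 2) ^ 2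
      + c₃ * (x - (a + b) / 2) ^ 3) = c₀ * (b - a) + c₂ * (b - a) ^ 3 / 12 := by
  rw [integral_comp_sub_right (fun t ↦ c₀ + c₁ * t + c₂ * t ^ 2 + c₃ * t ^ 3),
    integral_add, integral_add, integral_add]
  · simp only [integral_const, integral_const_mul, integral_const_mul c₁ (fun x ↦ x), integral_id,
      integral_pow, smul_eq_mul]
    ring
  all_goals exact (by fun_prop : Continuous _).intervalIntegrable _ _

theorem ConvexOn.mul_midpoint_le_integral {f : ℝ → ℝ} {f' a b : ℝ}
    (hf : ConvexOn ℝ (Icc a b) f) (hab : a ≤ b) (hd : HasDerivAt f f' ((a + b) / 2))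
    (hi : IntervalIntegrable f MeasureTheory.volume a b) :
    (b - a) * f ((a + b) / 2) ≤ ∫ x in a..b, f x := by
  have hm : (a + b) / 2 ∈ Icc a b := ⟨by linarith, by linarith⟩
  calc (b - a) * f ((a + b) / 2)
      = ∫ x in a..b, (f ((a + b) / 2) + f' * (x - (a + b) / 2) + 0 * (x - (a + b) / 2) ^ 2
          + 0 * (x - (a + b) / 2) ^ 3) := by rw [integral_cubic_sub_midpoint]; ring
    _ ≤ ∫ x in a..b, f x := by
      refine integral_mono_on hab ((by fun_prop : Continuous _).intervalIntegrable _ _) hi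
        fun x hx ↦ ?_
      simpa using hf.add_mul_sub_le_of_hasDerivAt hm hx hd

theorem integral_le_mul_midpoint_add_of_convexOn_deriv2 {f f' f'' : ℝ → ℝ} {a b : ℝ}
    (hab : a ≤ b) (hf : ∀ x ∈ Icc a b, HasDerivAt f (f' x) x)
    (hf' : ∀ x ∈ Icc a b, HasDerivAt f' (f'' x) x) (hf'' : ConvexOn ℝ (Icc a b) f'') :
    ∫ x in a..b, f x ≤ (b - a) * f ((a + b) / 2) + (f'' a + f'' b) * (b - a) ^ 3 / 48 := by
  have hm : (a + b) / 2 ∈ Icc a b := ⟨by linarith, by linarith⟩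
  set m := (a + b) / 2
  set c₂ := (f'' a + f'' b) / 4
  set c₃ := slope f'' a b / 6
  -- `p''` is the chord of `f''`, so `p - f` is convex with a critical point at `m`.
  set p : ℝ → ℝ := fun x ↦ f m + f' m * (x - m) + c₂ * (x - m) ^ 2 + c₃ * (x - m) ^ 3
  have hp' : ∀ x ∈ Icc a b, HasDerivAt (fun x ↦ p x - f x)
      (f' m + 2 * c₂ * (x - m) + 3 * c₃ * (x - m) ^ 2 - f' x) x := fun x hx ↦
    (hasDerivAt_cubic _ _ _ _ m x).sub (hf x hx)
  have hp'' : ∀ x ∈ Icc a b, HasDerivAt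
      (fun x ↦ f' m + 2 * c₂ * (x - m) + 3 * c₃ * (x - m) ^ 2 - f' x)
      (2 * c₂ + 6 * c₃ * (x - m) - f'' x) x := fun x hx ↦ by
    have := (hasDerivAt_cubic (f' m) (2 * c₂) (3 * c₃) 0 m x).sub (hf' x hx)
    simp only [zero_mul, add_zero] at this
    exact this.congr_deriv (by ring)
  have hchord : f'' b = f'' a + slope f'' a b * (b - a) := by
    rw [mul_comm, ← smul_eq_mul, sub_smul_slope, vsub_eq_sub]; ring
  have hconv : ConvexOn ℝ (Icc a b) (fun x ↦ p x - f x) := by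
    refine convexOn_of_hasDerivWithinAt2_nonneg (convex_Icc a b)
      (fun x hx ↦ (hp' x hx).continuousAt.continuousWithinAt)
      (fun x hx ↦ (hp' x (interior_subset hx)).hasDerivWithinAt)
      (fun x hx ↦ (hp'' x (interior_subset hx)).hasDerivWithinAt) fun x hx ↦ ?_
    have := hf''.le_add_slope_mul_sub (interior_subset hx)
    simp only [c₂, c₃, m]
    linarith
  have hle : ∀ x ∈ Icc a b, f x ≤ p x := fun x hx ↦ by
    simpa [p] using hconv.add_mul_sub_le_of_hasDerivAt hm hx (hp' m hm)
  have hfc : ContinuousOn f (uIcc a b) := by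
    rw [uIcc_of_le hab]
    exact fun x hx ↦ (hf x hx).continuousAt.continuousWithinAt
  calc ∫ x in a..b, f x ≤ ∫ x in a..b, p x :=
        integral_mono_on hab hfc.intervalIntegrable
          ((by fun_prop : Continuous p).intervalIntegrable _ _) hle
    _ = _ := by simp only [p, m, integral_cubic_sub_midpoint]; ring

theorem hasDerivAt_natCast_mul_pow_sub_one (n : ℕ) (x : ℝ) :
    HasDerivAt (fun x ↦ (n : ℝ) * x ^ (n - 1)) ((n : ℝ) * ((n : ℝ) - 1) * x ^ (n - 2)) x := by
  rcases n with _ | k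
  · simpa using hasDerivAt_const x (0 : ℝ)
  · refine ((hasDerivAt_pow k x).const_mul ((k + 1 : ℕ) : ℝ)).congr_deriv ?_
    simp only [Nat.reduceSubDiff]
    push_cast
    ring

theorem stmt_10_general (a b : ℝ) (n : ℕ) (ha : 0 < a) (hab : a < b) :
    |(b ^ (n + 1) - a ^ (n + 1)) / ((n + 1) * (b - a)) - ((a + b) / 2) ^ n|
      ≤ (n : ℝ) * ((n : ℝ) - 1) * ((b - a) ^ 2 / 48) * (a ^ (n - 2) + b ^ (n - 2)) := by
  have hlen : 0 < b - a := sub_pos.2 hab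
  have hIcc : Icc a b ⊆ Ici 0 := fun x hx ↦ ha.le.trans hx.1
  have hcoef : 0 ≤ (n : ℝ) * ((n : ℝ) - 1) := by
    rcases n with _ | k
    · simp
    · push_cast; nlinarith
  have hlow := ((convexOn_pow n).subset hIcc (convex_Icc a b)).mul_midpoint_le_integral hab.le
    (hasDerivAt_pow n _) ((continuous_pow n).intervalIntegrable a b)
  have hup := integral_le_mul_midpoint_add_of_convexOn_deriv2 hab.le
    (fun x _ ↦ hasDerivAt_pow n x) (fun x _ ↦ hasDerivAt_natCast_mul_pow_sub_one n x)
    (((convexOn_pow (n - 2)).subset hIcc (convex_Icc a b)).smul hcoef)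
  have hR : 0 ≤ (n : ℝ) * ((n : ℝ) - 1) * ((b - a) ^ 2 / 48) * (a ^ (n - 2) + b ^ (n - 2)) :=
    mul_nonneg (mul_nonneg hcoef (by positivity))
      (add_nonneg (pow_nonneg ha.le _) (pow_nonneg (ha.trans hab).le _))
  rw [← div_div, ← integral_pow, abs_sub_le_iff]
  constructor
  · rw [sub_le_iff_le_add, div_le_iff₀ hlen]
    linarith
  · linarith [(le_div_iff₀' hlen).2 hlow]

/-- Proposition 12 of the paper (means version):
|L_n^n(a,b) − A(a,b)^n| ≤ n(n−1)((b−a)²/48)(a^(n−2)+b^(n−2)). -/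
theorem stmt_10 (a b : ℝ) (n : ℕ) (ha : 0 < a) (hab : a < b) (hn : 2 < n) :
    |(b ^ (n + 1) - a ^ (n + 1)) / ((n + 1) * (b - a)) - ((a + b) / 2) ^ n|
      ≤ (n : ℝ) * ((n : ℝ) - 1) * ((b - a) ^ 2 / 48) * (a ^ (n - 2) + b ^ (n - 2)) :=
  stmt_10_general a b n ha hab
end

section
/- Let a, b be real numbers with 0 < a < b, let n be a natural number with n > 2, and let p, q > 1 satisfy 1/p + 1/q = 1. Then |L_n^n(a,b) − A(a,b)^n| ≤ n·(n−1)·((b−a)²/(16·(2p+1)^(1/p))) · ( ((a^((n−2)·q) + 3·b^((n−2)·q))/4)^(1/q) + ((3·a^((n−2)·q) + b^((n−2)·q))/4)^(1/q) ), where L_n^n(a,b) = (b^(n+1) − a^(n+1))/((n+1)·(b−a)) and A(a,b) = (a+b)/2. -/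
/-!
Write `f x = x ^ n` and `m = (a + b) / 2`, so that `L_n^n(a, b)` is the mean of `f` over `[a, b]`.
The tangent to `f` at `m` lies below `f` (Bernoulli), and integrating it gives `A ^ n ≤ L_n^n`.
Above `f` on `[a, b]` lies the cubic tangent to `f` at `m` whose second derivative is the chord
of the convex function `f''`; its cubic term integrates to zero, whence
`L_n^n - A ^ n ≤ n (n - 1) (b - a) ^ 2 (a ^ (n - 2) + b ^ (n - 2)) / 48`.
This is at most the claimed bound, because `(2 p + 1) ^ (1 / p) ≤ 3` and the weighted power mean
inequality bounds `(a ^ (n - 2) + 3 b ^ (n - 2)) / 4` and `(3 a ^ (n - 2) + b ^ (n - 2)) / 4`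
by the corresponding `q`-power means.
-/

open Set intervalIntegral

theorem isMinOn_Icc_of_deriv2_nonneg {u u' u'' : ℝ → ℝ} {a b m : ℝ}
    (hu : ∀ x, HasDerivAt u (u' x) x) (hu' : ∀ x, HasDerivAt u' (u'' x) x)
    (hu'' : ∀ x ∈ Ioo a b, 0 ≤ u'' x) (hm : m ∈ Ioo a b) (hm0 : u' m = 0) :
    IsMinOn u (Icc a b) m := by
  have hconv : ConvexOn ℝ (Icc a b) u := by
    refine convexOn_of_hasDerivWithinAt2_nonneg (convex_Icc a b)
      (fun x _ ↦ (hu x).continuousAt.continuousWithinAt) (fun x _ ↦ (hu x).hasDerivWithinAt)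
      (fun x _ ↦ (hu' x).hasDerivWithinAt) ?_
    rwa [interior_Icc]
  refine hconv.isMinOn_of_rightDeriv_eq_zero (by rwa [interior_Icc]) ?_
  rw [(hu m).hasDerivWithinAt.derivWithin (uniqueDiffWithinAt_Ioi m), hm0]

theorem pow_le_chord (k : ℕ) {a b x : ℝ} (ha : 0 ≤ a) (hx : x ∈ Icc a b) :
    (b - a) * x ^ k ≤ (b - x) * a ^ k + (x - a) * b ^ k := by
  obtain rfl | hax := eq_or_lt_of_le hx.1
  · simp
  obtain rfl | hxb := eq_or_lt_of_le hx.2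
  · simp
  exact (convexOn_pow k).secant_mono_aux1 ha (ha.trans (hax.trans hxb).le) hax hxb

theorem tangent_le_pow_succ (n : ℕ) {m x : ℝ} (hm : 0 < m) (hx : -m ≤ x) :
    m ^ (n + 1) + (n + 1) * m ^ n * (x - m) ≤ x ^ (n + 1) := by
  have hbern := one_add_mul_le_pow (a := (x - m) / m) (by rw [le_div_iff₀ hm]; linarith) (n + 1)
  calc m ^ (n + 1) + (n + 1) * m ^ n * (x - m)
      = m ^ (n + 1) * (1 + ((n + 1 : ℕ) : ℝ) * ((x - m) / m)) := by
        push_cast; field_simp; ring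
    _ ≤ m ^ (n + 1) * (1 + (x - m) / m) ^ (n + 1) := by gcongr
    _ = x ^ (n + 1) := by rw [← mul_pow]; congr 1; field_simp; ring

theorem pow_le_midpoint_cubic (k : ℕ) {a b x : ℝ} (ha : 0 ≤ a) (hab : a < b) (hx : x ∈ Icc a b) :
    x ^ (k + 2) ≤ ((a + b) / 2) ^ (k + 2) + (k + 2) * ((a + b) / 2) ^ (k + 1) * (x - (a + b) / 2)
      + (k + 2) * (k + 1) * (a ^ k + b ^ k) / 4 * (x - (a + b) / 2) ^ 2
      + (k + 2) * (k + 1) * (b ^ k - a ^ k) / (6 * (b - a)) * (x - (a + b) / 2) ^ 3 := by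
  set m := (a + b) / 2
  set c₁ : ℝ := (k + 2) * m ^ (k + 1)
  set c₂ : ℝ := (k + 2) * (k + 1) * (a ^ k + b ^ k) / 4
  set c₃ : ℝ := (k + 2) * (k + 1) * (b ^ k - a ^ k) / (6 * (b - a))
  have hba : 0 < b - a := sub_pos.2 hab
  have hu : ∀ y, HasDerivAt (fun y ↦ m ^ (k + 2) + c₁ * (y - m) + c₂ * (y - m) ^ 2
      + c₃ * (y - m) ^ 3 - y ^ (k + 2))
      (c₁ + 2 * c₂ * (y - m) + 3 * c₃ * (y - m) ^ 2 - (k + 2) * y ^ (k + 1)) y := by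
    intro y
    have h := (hasDerivAt_id' y).sub_const m
    refine (((((hasDerivAt_const y (m ^ (k + 2))).add (h.const_mul c₁)).add
      ((h.pow 2).const_mul c₂)).add ((h.pow 3).const_mul c₃)).sub
      (hasDerivAt_pow (k + 2) y)).congr_deriv ?_
    push_cast
    ring
  have hu' : ∀ y, HasDerivAt (fun y ↦ c₁ + 2 * c₂ * (y - m) + 3 * c₃ * (y - m) ^ 2
      - (k + 2) * y ^ (k + 1))
      (2 * c₂ + 6 * c₃ * (y - m) - (k + 2) * (k + 1) * y ^ k) y := by
    intro y
    have h := (hasDerivAt_id' y).sub_const m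
    refine ((((hasDerivAt_const y c₁).add (h.const_mul (2 * c₂))).add
      ((h.pow 2).const_mul (3 * c₃))).sub
      ((hasDerivAt_pow (k + 1) y).const_mul ((k : ℝ) + 2))).congr_deriv ?_
    push_cast
    ring
  -- `6 c₃ (y - m) + 2 c₂` is the chord of `(k + 2) (k + 1) y ^ k` over `[a, b]`
  have hu'' : ∀ y ∈ Ioo a b, 0 ≤ 2 * c₂ + 6 * c₃ * (y - m) - (k + 2) * (k + 1) * y ^ k := by
    intro y hy
    have hchord := pow_le_chord k ha (Ioo_subset_Icc_self hy)
    have : 2 * c₂ + 6 * c₃ * (y - m) - (k + 2) * (k + 1) * y ^ k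
        = (k + 2) * (k + 1) * ((b - y) * a ^ k + (y - a) * b ^ k - (b - a) * y ^ k) / (b - a) := by
      simp only [c₂, c₃, m]
      field_simp
      ring
    rw [this]
    apply div_nonneg _ hba.le
    exact mul_nonneg (by positivity) (sub_nonneg.2 hchord)
  have hmin := isMinOn_Icc_of_deriv2_nonneg hu hu' hu''
    (show m ∈ Ioo a b by constructor <;> simp only [m] <;> linarith) (by simp [c₁]) hx
  simp only [mem_ofPred_eq, sub_self] at hmin
  linarith

theorem integral_cubic_about_midpoint (a b c₀ c₁ c₂ c₃ : ℝ) :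
    ∫ x in a..b, (c₀ + c₁ * (x - (a + b) / 2) + c₂ * (x - (a + b) / 2) ^ 2
      + c₃ * (x - (a + b) / 2) ^ 3) = (b - a) * c₀ + c₂ * (b - a) ^ 3 / 12 := by
  rw [integral_comp_sub_right (fun y ↦ c₀ + c₁ * y + c₂ * y ^ 2 + c₃ * y ^ 3) ((a + b) / 2),
    integral_add, integral_add, integral_add, integral_const_mul c₁ (fun x ↦ x)]
  · simp only [integral_const, integral_const_mul, integral_id, integral_pow, smul_eq_mul]
    ring
  all_goals exact Continuous.intervalIntegrable (by fun_prop) _ _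

theorem mul_pow_midpoint_le_integral_pow (n : ℕ) {a b : ℝ} (ha : 0 ≤ a) (hab : a < b) :
    (b - a) * ((a + b) / 2) ^ (n + 1) ≤ ∫ x in a..b, x ^ (n + 1) := by
  have htangent := integral_cubic_about_midpoint a b (((a + b) / 2) ^ (n + 1))
    ((n + 1) * ((a + b) / 2) ^ n) 0 0
  simp only [zero_mul, add_zero, zero_div] at htangent
  rw [← htangent]
  refine integral_mono_on hab.le (Continuous.intervalIntegrable (by fun_prop) _ _)
    (Continuous.intervalIntegrable (by fun_prop) _ _) fun x hx ↦ ?_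
  exact tangent_le_pow_succ n (by linarith) (by linarith [hx.1])

theorem integral_pow_le_mul_pow_midpoint_add (k : ℕ) {a b : ℝ} (ha : 0 ≤ a) (hab : a < b) :
    ∫ x in a..b, x ^ (k + 2) ≤ (b - a) * ((a + b) / 2) ^ (k + 2)
      + (k + 2) * (k + 1) * (a ^ k + b ^ k) * (b - a) ^ 3 / 48 := by
  calc ∫ x in a..b, x ^ (k + 2)
      ≤ ∫ x in a..b, (((a + b) / 2) ^ (k + 2)
          + (k + 2) * ((a + b) / 2) ^ (k + 1) * (x - (a + b) / 2)
          + (k + 2) * (k + 1) * (a ^ k + b ^ k) / 4 * (x - (a + b) / 2) ^ 2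
          + (k + 2) * (k + 1) * (b ^ k - a ^ k) / (6 * (b - a)) * (x - (a + b) / 2) ^ 3) :=
        integral_mono_on hab.le (Continuous.intervalIntegrable (by fun_prop) _ _)
          (Continuous.intervalIntegrable (by fun_prop) _ _)
          fun x hx ↦ pow_le_midpoint_cubic k ha hab hx
    _ = _ := by rw [integral_cubic_about_midpoint]; ring

theorem abs_pLogMean_pow_sub_midpoint_pow_le (k : ℕ) {a b : ℝ} (ha : 0 ≤ a) (hab : a < b) :
    |(b ^ (k + 2 + 1) - a ^ (k + 2 + 1)) / ((k + 2 + 1) * (b - a)) - ((a + b) / 2) ^ (k + 2)|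
      ≤ (k + 2) * (k + 1) * (b - a) ^ 2 * (a ^ k + b ^ k) / 48 := by
  have hba : 0 < b - a := sub_pos.2 hab
  have hint : ∫ x in a..b, x ^ (k + 2) = (b ^ (k + 2 + 1) - a ^ (k + 2 + 1)) / (k + 2 + 1) := by
    rw [integral_pow]
    push_cast
    ring
  have hlow := mul_pow_midpoint_le_integral_pow (k + 1) ha hab
  have hup := integral_pow_le_mul_pow_midpoint_add k ha hab
  rw [hint] at hlow hup
  have hmean : (b ^ (k + 2 + 1) - a ^ (k + 2 + 1)) / ((k + 2 + 1) * (b - a))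
      = (b ^ (k + 2 + 1) - a ^ (k + 2 + 1)) / (k + 2 + 1) / (b - a) := by
    rw [div_div, mul_comm]
  rw [abs_le, hmean, le_sub_iff_add_le, sub_le_iff_le_add, le_div_iff₀ hba, div_le_iff₀ hba]
  constructor <;> linarith

theorem two_mul_add_one_rpow_one_div_le_three {p : ℝ} (hp : 1 ≤ p) :
    (2 * p + 1) ^ (1 / p) ≤ 3 := by
  have hbern : 2 * p + 1 ≤ 3 ^ p := by
    have := one_add_mul_self_le_rpow_one_add (s := 2) (by norm_num) hp
    norm_num at this
    linarith
  rw [one_div, Real.rpow_inv_le_iff_of_pos (by linarith) (by norm_num) (by linarith)]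
  exact hbern

theorem weighted_mean_le_rpow_mean {w₁ w₂ c d q : ℝ} (hw₁ : 0 ≤ w₁) (hw₂ : 0 ≤ w₂)
    (hw : w₁ + w₂ = 1) (hc : 0 ≤ c) (hd : 0 ≤ d) (hq : 1 ≤ q) :
    w₁ * c + w₂ * d ≤ (w₁ * c ^ q + w₂ * d ^ q) ^ (1 / q) := by
  rw [one_div, Real.le_rpow_inv_iff_of_pos (by positivity) (by positivity) (by linarith)]
  exact (convexOn_rpow hq).2 hc hd hw₁ hw₂ hw

theorem stmt_11_general (a b p q : ℝ) (n : ℕ) (ha : 0 < a) (hab : a < b) (hn : 2 < n)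
    (hp : 1 < p) (hq : 1 < q) :
    |(b ^ (n + 1) - a ^ (n + 1)) / ((n + 1) * (b - a)) - ((a + b) / 2) ^ n|
      ≤ (n : ℝ) * ((n : ℝ) - 1) * ((b - a) ^ 2 / (16 * (2 * p + 1) ^ (1 / p))) *
          (((a ^ (((n : ℝ) - 2) * q) + 3 * b ^ (((n : ℝ) - 2) * q)) / 4) ^ (1 / q)
            + ((3 * a ^ (((n : ℝ) - 2) * q) + b ^ (((n : ℝ) - 2) * q)) / 4) ^ (1 / q)) := by
  obtain ⟨k, rfl⟩ : ∃ k, n = k + 2 := ⟨n - 2, by omega⟩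
  have hb : 0 < b := ha.trans hab
  have hpow : ∀ x : ℝ, 0 ≤ x → x ^ ((((k + 2 : ℕ) : ℝ) - 2) * q) = (x ^ k) ^ q := fun x hx ↦ by
    rw [Real.rpow_mul hx, Nat.cast_add, Nat.cast_ofNat, add_sub_cancel_right, Real.rpow_natCast]
  have hn₁ : ((k + 2 : ℕ) : ℝ) - 1 = k + 1 := by push_cast; ring
  rw [hpow a ha.le, hpow b hb.le, hn₁]
  have hmean₁ : (a ^ k + 3 * b ^ k) / 4 ≤ (((a ^ k) ^ q + 3 * (b ^ k) ^ q) / 4) ^ (1 / q) := by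
    convert weighted_mean_le_rpow_mean (w₁ := 1 / 4) (w₂ := 3 / 4) (by norm_num) (by norm_num)
      (by norm_num) (pow_nonneg ha.le k) (pow_nonneg hb.le k) hq.le using 1 <;> ring_nf
  have hmean₂ : (3 * a ^ k + b ^ k) / 4 ≤ ((3 * (a ^ k) ^ q + (b ^ k) ^ q) / 4) ^ (1 / q) := by
    convert weighted_mean_le_rpow_mean (w₁ := 3 / 4) (w₂ := 1 / 4) (by norm_num) (by norm_num)
      (by norm_num) (pow_nonneg ha.le k) (pow_nonneg hb.le k) hq.le using 1 <;> ring_nf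
  have hP := two_mul_add_one_rpow_one_div_le_three hp.le
  have hP₀ : 0 < (2 * p + 1) ^ (1 / p) := Real.rpow_pos_of_pos (by linarith) _
  calc _ ≤ (k + 2) * (k + 1) * (b - a) ^ 2 * (a ^ k + b ^ k) / 48 := by
        push_cast
        exact abs_pLogMean_pow_sub_midpoint_pow_le k ha.le hab
    _ = ((k + 2 : ℕ) : ℝ) * (k + 1) * ((b - a) ^ 2 / (16 * 3)) *
          ((a ^ k + 3 * b ^ k) / 4 + (3 * a ^ k + b ^ k) / 4) := by
        push_cast
        ring
    _ ≤ _ := by gcongr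

/-- Proposition 13 of the paper (means version, Hölder form). -/
theorem stmt_11 (a b p q : ℝ) (n : ℕ) (ha : 0 < a) (hab : a < b) (hn : 2 < n)
    (hp : 1 < p) (hq : 1 < q) (hpq : 1 / p + 1 / q = 1) :
    |(b ^ (n + 1) - a ^ (n + 1)) / ((n + 1) * (b - a)) - ((a + b) / 2) ^ n|
      ≤ (n : ℝ) * ((n : ℝ) - 1) * ((b - a) ^ 2 / (16 * (2 * p + 1) ^ (1 / p))) *
          (((a ^ (((n : ℝ) - 2) * q) + 3 * b ^ (((n : ℝ) - 2) * q)) / 4) ^ (1 / q)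
            + ((3 * a ^ (((n : ℝ) - 2) * q) + b ^ (((n : ℝ) - 2) * q)) / 4) ^ (1 / q)) :=
  stmt_11_general a b p q n ha hab hn hp hq
end

section
/- Let a, b be real numbers with 0 < a < b and let q ≥ 1. Then |L(a,b)^(−1) − A(a,b)^(−1)| ≤ ((b−a)²/24) · ( ((3·a^(−3q) + 5·b^(−3q))/8)^(1/q) + ((5·a^(−3q) + 3·b^(−3q))/8)^(1/q) ), i.e. |(ln b − ln a)/(b−a) − 2/(a+b)| ≤ ((b−a)²/24) · ( ((3·a^(−3q) + 5·b^(−3q))/8)^(1/q) + ((5·a^(−3q) + 3·b^(−3q))/8)^(1/q) ). -/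
/-!
Both sides are compared through two bounds for `log b - log a` obtained by viewing them as
functions of `b ≥ a` that vanish at `b = a` and differentiating: the lower bound
`2 (b - a) / (a + b)` makes `L⁻¹ - A⁻¹` nonnegative, and the upper bound yields
`L⁻¹ - A⁻¹ ≤ (b - a)² / 24 · (a⁻³ + b⁻³)`. Writing `a⁻³ + b⁻³` as the sum of the arithmetic means
with weights `(3/8, 5/8)` and `(5/8, 3/8)`, each is dominated by the power mean of order `q ≥ 1`.
-/

open Real Set

lemma monotoneOn_Ici_of_hasDerivAt_nonneg {f f' : ℝ → ℝ} {a : ℝ}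
    (hf : ∀ x ∈ Ici a, HasDerivAt f (f' x) x) (hf' : ∀ x ∈ Ioi a, 0 ≤ f' x) :
    MonotoneOn f (Ici a) := by
  refine monotoneOn_of_hasDerivWithinAt_nonneg (convex_Ici a)
    (fun x hx ↦ (hf x hx).continuousAt.continuousWithinAt) (fun x hx ↦ ?_) (by simpa using hf')
  rw [interior_Ici] at hx ⊢
  exact (hf x (Ioi_subset_Ici_self hx)).hasDerivWithinAt

lemma hasDerivAt_two_mul_sub_div_add {a x : ℝ} (hax : a + x ≠ 0) :
    HasDerivAt (fun x ↦ 2 * (x - a) / (a + x)) (4 * a / (a + x) ^ 2) x := by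
  refine ((((hasDerivAt_id x).sub_const a).const_mul 2).div
    ((hasDerivAt_id x).const_add a) hax).congr_deriv ?_
  simp only [id]
  ring

lemma two_mul_sub_div_add_le_log_sub_log {a b : ℝ} (ha : 0 < a) (hab : a ≤ b) :
    2 * (b - a) / (a + b) ≤ log b - log a := by
  have hmono : MonotoneOn (fun x ↦ log x - 2 * (x - a) / (a + x)) (Ici a) := by
    refine monotoneOn_Ici_of_hasDerivAt_nonneg (f' := fun x ↦ (x - a) ^ 2 / (x * (a + x) ^ 2))
      (fun x hx ↦ ?_) (fun x hx ↦ ?_)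
    · have hx : 0 < x := ha.trans_le hx
      refine ((hasDerivAt_log hx.ne').sub
        (hasDerivAt_two_mul_sub_div_add (a := a) (by positivity))).congr_deriv ?_
      field_simp
      ring
    · have hx : 0 < x := ha.trans hx
      positivity
  have := hmono self_mem_Ici hab hab
  simp only [sub_self, mul_zero, zero_div, sub_zero] at this
  linarith

lemma log_sub_log_le_two_mul_sub_div_add_add {a b : ℝ} (ha : 0 < a) (hab : a ≤ b) :
    log b - log a ≤ 2 * (b - a) / (a + b) + (b - a) ^ 3 / 24 * (a⁻¹ ^ 3 + b⁻¹ ^ 3) := by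
  have hmono : MonotoneOn
      (fun x ↦ 2 * (x - a) / (a + x) + (x - a) ^ 3 / 24 * (a⁻¹ ^ 3 + x⁻¹ ^ 3) - log x) (Ici a) := by
    refine monotoneOn_Ici_of_hasDerivAt_nonneg
      (f' := fun x ↦ (x - a) ^ 2 * ((x ^ 4 + a ^ 4) * x * (a + x) ^ 2 - 8 * a ^ 3 * x ^ 4)
        / (8 * a ^ 3 * x ^ 5 * (a + x) ^ 2)) (fun x hx ↦ ?_) (fun x hx ↦ ?_)
    · have hx : 0 < x := ha.trans_le hx
      have hcube := ((((hasDerivAt_id x).sub_const a).pow 3).div_const 24).mul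
          (((hasDerivAt_inv hx.ne').pow 3).const_add (a⁻¹ ^ 3))
      refine (((hasDerivAt_two_mul_sub_div_add (a := a) (by positivity)).add hcube).sub
        (hasDerivAt_log hx.ne')).congr_deriv ?_
      simp only [id, Pi.pow_apply, Nat.reduceSub]
      field_simp
      ring
    · have hx : 0 < x := ha.trans hx
      have h₁ : 2 * a ^ 2 * x ^ 2 ≤ x ^ 4 + a ^ 4 := by nlinarith [sq_nonneg (x ^ 2 - a ^ 2)]
      have h₂ : 4 * a * x ≤ (a + x) ^ 2 := by nlinarith [sq_nonneg (x - a)]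
      have h₃ := mul_le_mul h₁ h₂ (by positivity) (by positivity)
      have : 0 ≤ (x ^ 4 + a ^ 4) * x * (a + x) ^ 2 - 8 * a ^ 3 * x ^ 4 := by nlinarith
      positivity
  have := hmono self_mem_Ici hab hab
  simp only [sub_self, mul_zero, zero_div, zero_add, ne_eq, OfNat.ofNat_ne_zero,
    not_false_eq_true, zero_pow] at this
  linarith

lemma arith_mean2_le_rpow_mean2 {w₁ w₂ x y p : ℝ} (hw₁ : 0 ≤ w₁) (hw₂ : 0 ≤ w₂)
    (hw : w₁ + w₂ = 1) (hx : 0 ≤ x) (hy : 0 ≤ y) (hp : 1 ≤ p) :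
    w₁ * x + w₂ * y ≤ (w₁ * x ^ p + w₂ * y ^ p) ^ (1 / p) := by
  simpa [Fin.sum_univ_two] using Real.arith_mean_le_rpow_mean Finset.univ ![w₁, w₂] ![x, y]
    (by simp [Fin.forall_fin_two, hw₁, hw₂]) (by simpa [Fin.sum_univ_two] using hw)
    (by simp [Fin.forall_fin_two, hx, hy]) hp

lemma add_le_rpow_mean_add_rpow_mean {x y p : ℝ} (hx : 0 ≤ x) (hy : 0 ≤ y) (hp : 1 ≤ p) :
    x + y ≤ ((3 * x ^ p + 5 * y ^ p) / 8) ^ (1 / p) + ((5 * x ^ p + 3 * y ^ p) / 8) ^ (1 / p) := by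
  have h₁ : 3 / 8 * x + 5 / 8 * y ≤ ((3 * x ^ p + 5 * y ^ p) / 8) ^ (1 / p) := by
    convert arith_mean2_le_rpow_mean2 (w₁ := 3 / 8) (w₂ := 5 / 8) (by norm_num) (by norm_num)
      (by norm_num) hx hy hp using 2
    ring
  have h₂ : 5 / 8 * x + 3 / 8 * y ≤ ((5 * x ^ p + 3 * y ^ p) / 8) ^ (1 / p) := by
    convert arith_mean2_le_rpow_mean2 (w₁ := 5 / 8) (w₂ := 3 / 8) (by norm_num) (by norm_num)
      (by norm_num) hx hy hp using 2
    ring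
  linarith

/-- Proposition 14 of the paper (means version): logarithmic vs arithmetic mean. -/
theorem stmt_12 (a b q : ℝ) (ha : 0 < a) (hab : a < b) (hq : 1 ≤ q) :
    |(Real.log b - Real.log a) / (b - a) - 2 / (a + b)|
      ≤ ((b - a) ^ 2 / 24) *
          (((3 * a ^ (-3 * q) + 5 * b ^ (-3 * q)) / 8) ^ (1 / q)
            + ((5 * a ^ (-3 * q) + 3 * b ^ (-3 * q)) / 8) ^ (1 / q)) := by
  have hb : 0 < b := ha.trans hab
  have hba : 0 < b - a := sub_pos.mpr hab
  have hlower : 2 / (a + b) ≤ (log b - log a) / (b - a) := by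
    rw [le_div_iff₀ hba, div_mul_eq_mul_div]
    exact two_mul_sub_div_add_le_log_sub_log ha hab.le
  have hpow {x : ℝ} (hx : 0 < x) : x ^ (-3 * q) = (x⁻¹ ^ 3) ^ q := by
    rw [rpow_mul hx.le, rpow_neg hx.le, ← inv_rpow hx.le]
    norm_cast
  rw [abs_of_nonneg (sub_nonneg.mpr hlower), hpow ha, hpow hb]
  calc (log b - log a) / (b - a) - 2 / (a + b)
      ≤ (b - a) ^ 2 / 24 * (a⁻¹ ^ 3 + b⁻¹ ^ 3) := by
        rw [sub_le_iff_le_add, div_le_iff₀ hba]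
        refine (log_sub_log_le_two_mul_sub_div_add_add ha hab.le).trans_eq ?_
        ring
    _ ≤ _ := mul_le_mul_of_nonneg_left
        (add_le_rpow_mean_add_rpow_mean (by positivity) (by positivity) hq) (by positivity)
end
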